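/- arXiv:math/9811150 — 5 statements merged into one kernel-verified Lean document; each statement's English description precedes it below -/
import Mathlib

section
/- Let e and n be natural numbers. In the ring of formal power series ℚ⟦q⟧, the coefficient of q^n in the power series (∏_{k=1}^{n} (1 - q^k)⁻¹)^e equals the sum, over all partitions ν of n, of (∏_{i=1}^{n} p(i)^{α_i(ν)}) · e·(e-1)···(e-(λ(ν)-1)) / (α_1(ν)! ··· α_n(ν)!), where the numerator falling factorial is the descending factorial of e of length λ(ν). (This is the combinatorial content of the main theorem: the generating function ∏_{k≥1}(1-q^k)^{-e} has these coefficients; truncating the product at k = n does not change the coefficient of q^n.) -/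
/-- The partition function: `p m` is the number of partitions of `m`. -/
noncomputable def partitionFunction (m : ℕ) : ℕ := Fintype.card (Nat.Partition m)

namespace PartAuxCCA

open PowerSeries Finset Equiv
open scoped Classical


open PowerSeries Finset
open scoped Classical

noncomputable section

variable {α : Type*}

/-- A convenience constructor for the power series whose coefficients indicate a subset. -/
def indicatorSeries (α : Type*) [Semiring α] (s : Set ℕ) : PowerSeries α :=
  PowerSeries.mk fun n => if n ∈ s then 1 else 0

theorem coeff_indicator (s : Set ℕ) [Semiring α] (n : ℕ) :
    coeff (R := α) n (indicatorSeries _ s) = if n ∈ s then 1 else 0 :=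
  coeff_mk _ _

theorem constantCoeff_indicator (s : Set ℕ) [Semiring α] :
    constantCoeff (R := α) (indicatorSeries _ s) = if 0 ∈ s then 1 else 0 :=
  rfl

theorem num_series' [Field α] (i : ℕ) :
    (1 - (X : PowerSeries α) ^ (i + 1))⁻¹ = indicatorSeries α {k | i + 1 ∣ k} := by
  rw [PowerSeries.inv_eq_iff_mul_eq_one]
  · ext n
    cases n with
    | zero => simp [mul_sub, zero_pow, constantCoeff_indicator]
    | succ n =>
      simp only [coeff_one, if_false, mul_sub, mul_one, coeff_indicator,
        LinearMap.map_sub, reduceCtorEq]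
      simp_rw [coeff_mul, coeff_X_pow, coeff_indicator, @boole_mul _ _ _ _]
      erw [@sum_ite _ _ _ _ (fun x : ℕ × ℕ => x.1 ∈ {k | i + 1 ∣ k}) (fun _ => Classical.propDecidable _), sum_ite]
      simp_rw [@filter_filter _ _ _ _ _, sum_const_zero, add_zero, sum_const, nsmul_eq_mul, mul_one,
        sub_eq_iff_eq_add, zero_add]
      symm
      split_ifs with h
      · suffices #{a ∈ antidiagonal (n + 1) | i + 1 ∣ a.fst ∧ a.snd = i + 1} = 1 by
          simp only [Set.mem_setOf_eq]; convert congr_arg ((↑) : ℕ → α) this; norm_cast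
        rw [card_eq_one]
        cases' h with p hp
        refine ⟨((i + 1) * (p - 1), i + 1), ?_⟩
        ext ⟨a₁, a₂⟩
        simp only [mem_filter, Prod.mk.injEq, HasAntidiagonal.mem_antidiagonal, mem_singleton]
        constructor
        · rintro ⟨a_left, ⟨a, rfl⟩, rfl⟩
          refine ⟨?_, rfl⟩
          rw [Nat.mul_sub_left_distrib, ← hp, ← a_left, mul_one, Nat.add_sub_cancel]
        · rintro ⟨rfl, rfl⟩
          match p with
          | 0 => rw [mul_zero] at hp; cases hp
          | p + 1 => rw [hp]; simp [mul_add]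
      · suffices #{a ∈ antidiagonal (n + 1) | i + 1 ∣ a.fst ∧ a.snd = i + 1} = 0 by
          simp only [Set.mem_setOf_eq]; convert congr_arg ((↑) : ℕ → α) this; norm_cast
        rw [card_eq_zero]
        apply eq_empty_of_forall_notMem
        simp only [Prod.forall, mem_filter, not_and, HasAntidiagonal.mem_antidiagonal]
        rintro _ h₁ h₂ ⟨a, rfl⟩ rfl
        apply h
        simp [← h₂]
  · simp [zero_pow]

-- The main workhorse of the partition theorem proof.
theorem partialGF_prop (α : Type*) [CommSemiring α] (n : ℕ) (s : Finset ℕ) (hs : ∀ i ∈ s, 0 < i)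
    (c : ℕ → Set ℕ) (hc : ∀ i, i ∉ s → 0 ∈ c i) :
    #{p : n.Partition | (∀ j, p.parts.count j ∈ c j) ∧ ∀ j ∈ p.parts, j ∈ s} =
      coeff (R := α) n (∏ i ∈ s, indicatorSeries α ((· * i) '' c i)) := by
  simp_rw [coeff_prod, coeff_indicator, prod_boole, sum_boole]
  apply congr_arg
  simp only [mem_univ, forall_true_left, not_and, not_forall, exists_prop,
    Set.mem_image, not_exists]
  set φ : (a : Nat.Partition n) →
    a ∈ filter (fun p ↦ (∀ (j : ℕ), Multiset.count j p.parts ∈ c j) ∧ ∀ j ∈ p.parts, j ∈ s) univ →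
    ℕ →₀ ℕ := fun p _ => {
      toFun := fun i => Multiset.count i p.parts • i
      support := Finset.filter (fun i => i ≠ 0) p.parts.toFinset
      mem_support_toFun := fun a => by
        simp only [smul_eq_mul, ne_eq, mul_eq_zero, Multiset.count_eq_zero]
        rw [not_or, not_not]
        simp only [Multiset.mem_toFinset, not_not, mem_filter] }
  refine Finset.card_bij φ ?_ ?_ ?_
  · intro a ha
    simp only [φ, not_forall, not_exists, not_and, exists_prop, mem_filter]
    rw [mem_finsuppAntidiag]
    dsimp only [ne_eq, smul_eq_mul, id_eq, eq_mpr_eq_cast, le_eq_subset, Finsupp.coe_mk]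
    simp only [mem_univ, forall_true_left, not_and, not_forall, exists_prop,
      mem_filter, true_and] at ha
    refine ⟨⟨?_, fun i ↦ ?_⟩, fun i _ ↦ ⟨a.parts.count i, ha.1 i, rfl⟩⟩
    · conv_rhs => simp [← a.parts_sum]
      rw [sum_multiset_count_of_subset _ s]
      · simp only [smul_eq_mul]
      · intro i
        simp only [Multiset.mem_toFinset, not_not, mem_filter]
        apply ha.2
    · simp only [ne_eq, Multiset.mem_toFinset, not_not, mem_filter, and_imp]
      exact fun hi _ ↦ ha.2 i hi
  · intro p₁ hp₁ p₂ hp₂ h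
    apply Nat.Partition.ext
    simp only [true_and, mem_univ, mem_filter] at hp₁ hp₂
    ext i
    simp only [φ, ne_eq, Multiset.mem_toFinset, not_not, smul_eq_mul, Finsupp.mk.injEq] at h
    by_cases hi : i = 0
    · rw [hi]
      rw [Multiset.count_eq_zero_of_notMem]
      · rw [Multiset.count_eq_zero_of_notMem]
        intro a; exact Nat.lt_irrefl 0 (hs 0 (hp₂.2 0 a))
      intro a; exact Nat.lt_irrefl 0 (hs 0 (hp₁.2 0 a))
    · rw [← mul_left_inj' hi]
      rw [funext_iff] at h
      exact h.2 i
  · simp only [φ, mem_filter, mem_finsuppAntidiag, mem_univ, exists_prop, true_and, and_assoc]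
    rintro f ⟨hf, hf₃, hf₄⟩
    have hf' : f ∈ finsuppAntidiag s n := mem_finsuppAntidiag.mpr ⟨hf, hf₃⟩
    simp only [mem_finsuppAntidiag] at hf'
    refine ⟨⟨∑ i ∈ s, Multiset.replicate (f i / i) i, ?_, ?_⟩, ?_, ?_, ?_⟩
    · intro i hi
      simp only [exists_prop, Multiset.mem_sum, mem_map, Function.Embedding.coeFn_mk] at hi
      rcases hi with ⟨t, ht, z⟩
      apply hs
      rwa [Multiset.eq_of_mem_replicate z]
    · simp_rw [Multiset.sum_sum, Multiset.sum_replicate, Nat.nsmul_eq_mul]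
      rw [← hf'.1]
      refine sum_congr rfl fun i hi => Nat.div_mul_cancel ?_
      rcases hf₄ i hi with ⟨w, _, hw₂⟩
      rw [← hw₂]
      exact dvd_mul_left _ _
    · intro i
      simp_rw [Multiset.count_sum', Multiset.count_replicate, sum_ite_eq']
      split_ifs with h
      · rcases hf₄ i h with ⟨w, hw₁, hw₂⟩
        rwa [← hw₂, Nat.mul_div_cancel _ (hs i h)]
      · exact hc _ h
    · intro i hi
      rw [Multiset.mem_sum] at hi
      rcases hi with ⟨j, hj₁, hj₂⟩
      rwa [Multiset.eq_of_mem_replicate hj₂]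
    · ext i
      simp_rw [Multiset.count_sum', Multiset.count_replicate, sum_ite_eq']
      simp only [ne_eq, Multiset.mem_toFinset, not_not, smul_eq_mul, ite_mul,
        zero_mul, Finsupp.coe_mk]
      split_ifs with h
      · apply Nat.div_mul_cancel
        rcases hf₄ i h with ⟨w, _, hw₂⟩
        apply Dvd.intro_left _ hw₂
      · apply symm
        rw [← Finsupp.notMem_support_iff]
        exact notMem_mono hf'.2 h

end
theorem coeff_truncated_prod (n m : ℕ) (h : m ≤ n) :
    coeff (R := ℚ) m (∏ k ∈ Finset.Icc 1 n, (1 - PowerSeries.X ^ k : PowerSeries ℚ)⁻¹) =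
      partitionFunction m := by
  have key := partialGF_prop ℚ m (Icc 1 n) (fun i hi => (mem_Icc.mp hi).1)
    (fun _ => Set.univ) (fun _ _ => trivial)
  have hprod : (∏ i ∈ Icc 1 n, indicatorSeries ℚ ((· * i) '' Set.univ)) =
      ∏ k ∈ Icc 1 n, (1 - PowerSeries.X ^ k : PowerSeries ℚ)⁻¹ := by
    refine Finset.prod_congr rfl fun i hi => ?_
    obtain ⟨i, rfl⟩ := Nat.exists_eq_add_of_lt (mem_Icc.mp hi).1
    rw [zero_add]
    have hset : ((· * (i + 1)) '' Set.univ) = {k | (i + 1) ∣ k} := by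
      ext k
      simp only [Set.image_univ, Set.mem_range, Set.mem_setOf_eq]
      constructor
      · rintro ⟨a, rfl⟩; exact Dvd.intro_left a rfl
      · rintro ⟨a, rfl⟩; exact ⟨a, mul_comm _ _⟩
    rw [hset, num_series']
  rw [hprod] at key
  rw [← key, _root_.partitionFunction]
  rw [Finset.filter_true_of_mem, Finset.card_univ]
  intro p _
  refine ⟨fun j => trivial, fun j hj => mem_Icc.mpr ⟨p.parts_pos hj, le_trans ?_ h⟩⟩
  exact le_trans (Multiset.le_sum_of_mem hj) (le_of_eq p.parts_sum)



lemma ofFn_eq_iff {k : ℕ} (f g : Fin k → ℕ) :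
    (↑(List.ofFn f) : Multiset ℕ) = ↑(List.ofFn g) ↔ ∃ σ : Equiv.Perm (Fin k), f = g ∘ σ := by
  rw [Multiset.coe_eq_coe]
  constructor
  · intro h
    have h1 : (List.ofFn (f ∘ Tuple.sort f)).Perm (List.ofFn (g ∘ Tuple.sort g)) :=
      ((Tuple.sort f).ofFn_comp_perm f).trans (h.trans ((Tuple.sort g).ofFn_comp_perm g).symm)
    have h2 : f ∘ Tuple.sort f = g ∘ Tuple.sort g :=
      List.ofFn_injective (List.Perm.eq_of_sortedLE
        (Monotone.sortedLE_ofFn (Tuple.monotone_sort f))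
        (Monotone.sortedLE_ofFn (Tuple.monotone_sort g)) h1)
    refine ⟨(Tuple.sort f).symm.trans (Tuple.sort g), funext fun x => ?_⟩
    have := congrFun h2 ((Tuple.sort f).symm x)
    simpa using this
  · rintro ⟨σ, rfl⟩
    exact σ.ofFn_comp_perm g

lemma exists_ofFn (e : ℕ) (m₀ : Multiset ℕ) (h : Multiset.card m₀ = e) :
    ∃ f₀ : Fin e → ℕ, (↑(List.ofFn f₀) : Multiset ℕ) = m₀ := by
  subst h
  have hlen : m₀.toList.length = Multiset.card m₀ := Multiset.length_toList m₀
  refine ⟨fun i => m₀.toList.get (Fin.cast hlen.symm i), ?_⟩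
  have : List.ofFn (fun i => m₀.toList.get (Fin.cast hlen.symm i)) = m₀.toList := by
    apply List.ext_get
    · simp
    · intro i h1 h2
      simp [List.get_ofFn]
  rw [this, Multiset.coe_toList]

open MulAction in
lemma card_comp_perm (e : ℕ) (f₀ : Fin e → ℕ) :
    Nat.card {f : Fin e → ℕ // ∃ σ : Equiv.Perm (Fin e), f = f₀ ∘ σ} *
      ∏ i ∈ Finset.univ.image f₀, (Fintype.card {a // f₀ a = i}).factorial =
      Nat.factorial e := by
  classical
  have horb : Nat.card {f : Fin e → ℕ // ∃ σ : Equiv.Perm (Fin e), f = f₀ ∘ σ} =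
      Nat.card (MulAction.orbit (Equiv.Perm (Fin e))ᵈᵐᵃ f₀) := by
    apply Nat.card_congr
    apply Equiv.subtypeEquivRight
    intro f
    rw [MulAction.mem_orbit_iff]
    constructor
    · rintro ⟨σ, rfl⟩
      exact ⟨DomMulAct.mk σ, rfl⟩
    · rintro ⟨g, rfl⟩
      exact ⟨DomMulAct.mk.symm g, rfl⟩
  have hstab : Nat.card (MulAction.stabilizer (Equiv.Perm (Fin e))ᵈᵐᵃ f₀) =
      ∏ i ∈ Finset.univ.image f₀, (Fintype.card {a // f₀ a = i}).factorial := by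
    have equ : {g // g ∈ MulAction.stabilizer (Equiv.Perm (Fin e))ᵈᵐᵃ f₀} ≃
        {σ : Equiv.Perm (Fin e) // f₀ ∘ σ = f₀} :=
      Equiv.subtypeEquiv DomMulAct.mk.symm fun g => DomMulAct.mem_stabilizer_iff
    rw [Nat.card_congr equ, Nat.card_eq_fintype_card]
    exact DomMulAct.stabilizer_card' f₀
  have hG : Nat.card (Equiv.Perm (Fin e))ᵈᵐᵃ = Nat.factorial e := by
    rw [Nat.card_congr (DomMulAct.mk (M := Equiv.Perm (Fin e))).symm, Nat.card_eq_fintype_card,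
      Fintype.card_perm, Fintype.card_fin]
  have hq := Subgroup.card_eq_card_quotient_mul_card_subgroup
    (MulAction.stabilizer (Equiv.Perm (Fin e))ᵈᵐᵃ f₀)
  rw [horb, Nat.card_congr (MulAction.orbitEquivQuotientStabilizer (Equiv.Perm (Fin e))ᵈᵐᵃ f₀),
    ← hstab, ← hq, hG]

lemma card_ofFn_fiber (e : ℕ) (m₀ : Multiset ℕ) (h : Multiset.card m₀ = e) :
    Nat.card {f : Fin e → ℕ // (↑(List.ofFn f) : Multiset ℕ) = m₀} *
      ∏ i ∈ m₀.toFinset, (m₀.count i).factorial = Nat.factorial e := by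
  classical
  obtain ⟨f₀, hf₀⟩ := exists_ofFn e m₀ h
  subst hf₀
  have h1 : Nat.card {f : Fin e → ℕ // (↑(List.ofFn f) : Multiset ℕ) = ↑(List.ofFn f₀)} =
      Nat.card {f : Fin e → ℕ // ∃ σ : Equiv.Perm (Fin e), f = f₀ ∘ σ} :=
    Nat.card_congr (Equiv.subtypeEquivRight fun f => ofFn_eq_iff f f₀)
  rw [h1, ← card_comp_perm e f₀]
  congr 1
  have hms : (↑(List.ofFn f₀) : Multiset ℕ) = Multiset.map f₀ (univ : Finset (Fin e)).val := by
    rw [List.ofFn_eq_map]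
    rfl
  have htf : (↑(List.ofFn f₀) : Multiset ℕ).toFinset = Finset.univ.image f₀ := by
    rw [hms]
    ext i
    simp [Multiset.mem_toFinset, List.mem_ofFn, eq_comm]
  rw [htf]
  refine Finset.prod_congr rfl fun i _ => ?_
  congr 1
  rw [hms, Multiset.count_map, Fintype.card_subtype]
  rw [show Multiset.filter (fun a => i = f₀ a) (univ : Finset (Fin e)).val =
    ((univ : Finset (Fin e)).filter (fun a => i = f₀ a)).val from rfl, ← Finset.card_def]
  congr 1
  apply Finset.filter_congr
  intro a _
  exact eq_comm

lemma card_partition_fiber (n e : ℕ) (ν : Nat.Partition n) :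
    Nat.card {f : Fin e → ℕ // (↑(List.ofFn f) : Multiset ℕ).filter (· ≠ 0) = ν.parts} *
      ∏ j ∈ Finset.Icc 1 n, (ν.parts.count j).factorial =
      Nat.descFactorial e (Multiset.card ν.parts) := by
  classical
  set lam := Multiset.card ν.parts with hlam
  by_cases hle : lam ≤ e
  swap
  · rw [Nat.descFactorial_eq_zero_iff_lt.mpr (lt_of_not_ge hle)]
    convert zero_mul _
    rw [Nat.card_eq_zero]
    left
    constructor
    rintro ⟨f, hf⟩
    apply hle
    rw [hlam, ← hf]
    calc Multiset.card (Multiset.filter (· ≠ 0) ↑(List.ofFn f))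
        ≤ Multiset.card (↑(List.ofFn f) : Multiset ℕ) := Multiset.card_le_card (Multiset.filter_le _ _)
      _ = e := by simp
  · set m₀ : Multiset ℕ := ν.parts + Multiset.replicate (e - lam) 0 with hm₀
    have hcard : Multiset.card m₀ = e := by
      rw [hm₀]; simp [Multiset.card_replicate, ← hlam]; omega
    have hpred : ∀ f : Fin e → ℕ,
        (↑(List.ofFn f) : Multiset ℕ).filter (· ≠ 0) = ν.parts ↔
          (↑(List.ofFn f) : Multiset ℕ) = m₀ := by
      intro f
      constructor
      · intro hf
        have hsplit := Multiset.filter_add_not (· ≠ 0) (↑(List.ofFn f) : Multiset ℕ)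
        have hzeros : Multiset.filter (fun a => ¬ a ≠ 0) (↑(List.ofFn f) : Multiset ℕ) =
            Multiset.replicate (e - lam) 0 := by
          have h1 : Multiset.filter (fun a => ¬ a ≠ 0) (↑(List.ofFn f) : Multiset ℕ) =
              Multiset.filter (· = 0) (↑(List.ofFn f) : Multiset ℕ) := by
            apply Multiset.filter_congr; intro x _; simp
          rw [h1, Multiset.filter_eq']
          congr 1
          have hctot : Multiset.card (↑(List.ofFn f) : Multiset ℕ) = e := by simp
          have := congrArg Multiset.card (Multiset.filter_add_not (· ≠ 0) (↑(List.ofFn f) : Multiset ℕ))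
          rw [Multiset.card_add, hf, h1, Multiset.filter_eq', Multiset.card_replicate, hctot] at this
          omega
        rw [hm₀, ← hf, ← hzeros, hsplit]
      · intro hf
        rw [hf, hm₀, Multiset.filter_add]
        have h1 : Multiset.filter (· ≠ 0) ν.parts = ν.parts :=
          Multiset.filter_eq_self.mpr fun a ha => (ν.parts_pos ha).ne'
        have h2 : Multiset.filter (· ≠ 0) (Multiset.replicate (e - lam) 0) = 0 := by
          rw [Multiset.filter_eq_nil]
          intro a ha
          simp [Multiset.eq_of_mem_replicate ha]
        rw [h1, h2, add_zero]
    rw [Nat.card_congr (Equiv.subtypeEquivRight hpred)]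
    have hprodeq : ∏ i ∈ m₀.toFinset, (m₀.count i).factorial =
        (e - lam).factorial * ∏ j ∈ Finset.Icc 1 n, (ν.parts.count j).factorial := by
      have hsub : m₀.toFinset ⊆ insert 0 (Finset.Icc 1 n) := by
        intro i hi
        rw [Multiset.mem_toFinset, hm₀, Multiset.mem_add] at hi
        rcases hi with hi | hi
        · exact Finset.mem_insert.mpr (Or.inr (Finset.mem_Icc.mpr
            ⟨ν.parts_pos hi, le_trans (Multiset.le_sum_of_mem hi) (le_of_eq ν.parts_sum)⟩))
        · rw [Multiset.eq_of_mem_replicate hi]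
          exact Finset.mem_insert_self _ _
      rw [Finset.prod_subset hsub (fun i _ hi => by
        rw [Multiset.count_eq_zero_of_notMem (fun h => hi (Multiset.mem_toFinset.mpr h))]
        rfl)]
      rw [Finset.prod_insert (by simp)]
      congr 1
      · congr 1
        rw [hm₀, Multiset.count_add, Multiset.count_replicate]
        have : Multiset.count 0 ν.parts = 0 :=
          Multiset.count_eq_zero_of_notMem (fun h => (ν.parts_pos h).ne' rfl)
        simp [this]
      · refine Finset.prod_congr rfl fun j hj => ?_
        congr 1
        rw [hm₀, Multiset.count_add, Multiset.count_replicate]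
        have hj0 : j ≠ 0 := by
          have := (Finset.mem_Icc.mp hj).1; omega
        simp [Ne.symm hj0]
    have hkey := card_ofFn_fiber e m₀ hcard
    have hdesc := Nat.factorial_mul_descFactorial hle
    apply Nat.eq_of_mul_eq_mul_left (Nat.factorial_pos (e - lam))
    calc (e - lam).factorial *
          (Nat.card {f : Fin e → ℕ // (↑(List.ofFn f) : Multiset ℕ) = m₀} *
            ∏ j ∈ Finset.Icc 1 n, (ν.parts.count j).factorial)
        = Nat.card {f : Fin e → ℕ // (↑(List.ofFn f) : Multiset ℕ) = m₀} *
            ((e - lam).factorial * ∏ j ∈ Finset.Icc 1 n, (ν.parts.count j).factorial) := by ring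
      _ = Nat.card {f : Fin e → ℕ // (↑(List.ofFn f) : Multiset ℕ) = m₀} *
            ∏ i ∈ m₀.toFinset, (m₀.count i).factorial := by rw [hprodeq]
      _ = e.factorial := hkey
      _ = (e - lam).factorial * e.descFactorial lam := hdesc.symm

lemma partitionFunction_zero : partitionFunction 0 = 1 := by
  rw [partitionFunction, Fintype.card_eq_one_iff]
  refine ⟨⟨0, fun h => absurd h (Multiset.notMem_zero _), rfl⟩, fun y => ?_⟩
  ext1
  simp only
  rw [Multiset.eq_zero_iff_forall_notMem]
  intro a ha
  have h0 : a = 0 := by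
    have := y.parts_sum
    have hle : a ≤ Multiset.sum y.parts := Multiset.le_sum_of_mem ha
    omega
  exact (y.parts_pos ha).ne' h0

end PartAuxCCA

open PartAuxCCA Finset PowerSeries in
/-- The coefficient of `q^n` in `(∏_{k=1}^n (1 - q^k)⁻¹)^e ∈ ℚ⟦q⟧` equals
`∑_{ν ⊢ n} (∏_i p(i)^{α_i(ν)}) · e(e-1)⋯(e-(λ(ν)-1)) / (α_1(ν)! ⋯ α_n(ν)!)`. -/
theorem coeff_prod_inv_pow_eq_sum_partitions (e n : ℕ) :
    PowerSeries.coeff (R := ℚ) n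
        ((∏ k ∈ Finset.Icc 1 n, (1 - PowerSeries.X ^ k : PowerSeries ℚ)⁻¹) ^ e) =
      ∑ ν : Nat.Partition n,
        (∏ i ∈ Finset.Icc 1 n, (partitionFunction i : ℚ) ^ (ν.parts.count i)) *
          (Nat.descFactorial e (Multiset.card ν.parts) : ℚ) /
          (∏ i ∈ Finset.Icc 1 n, ((ν.parts.count i).factorial : ℚ)) := by
  classical
  set F : PowerSeries ℚ := ∏ k ∈ Finset.Icc 1 n, (1 - PowerSeries.X ^ k : PowerSeries ℚ)⁻¹ with hF
  have hFpow : F ^ e = ∏ _i ∈ (univ : Finset (Fin e)), F := by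
    rw [Finset.prod_const, Finset.card_univ, Fintype.card_fin]
  rw [hFpow, PowerSeries.coeff_prod]
  set A := Finset.finsuppAntidiag (univ : Finset (Fin e)) n with hA
  -- replace coefficients by partition function values
  have hcoeff : ∀ l ∈ A, ∏ i ∈ (univ : Finset (Fin e)), coeff (R := ℚ) (l i) F =
      ∏ i ∈ (univ : Finset (Fin e)), (partitionFunction (l i) : ℚ) := by
    intro l hl
    rw [Finset.mem_finsuppAntidiag] at hl
    refine Finset.prod_congr rfl fun i _ => ?_
    apply coeff_truncated_prod
    rw [← hl.1]
    exact Finset.single_le_sum (fun j _ => Nat.zero_le _) (Finset.mem_univ i)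
  rw [Finset.sum_congr rfl hcoeff]
  -- fiberwise sum over partitions
  set g : (Fin e →₀ ℕ) → Nat.Partition n := fun l =>
    if h : (Multiset.map l (univ : Finset (Fin e)).val).sum = n then
      Nat.Partition.ofSums n _ h
    else Nat.Partition.ofSums n (Multiset.replicate n 1) (by simp) with hg
  rw [← Finset.sum_fiberwise_of_maps_to (g := g) (fun l _ => Finset.mem_univ (g l))]
  refine Finset.sum_congr rfl fun ν _ => ?_
  -- characterize fiber membership
  have hmem : ∀ l : Fin e →₀ ℕ, (l ∈ A ∧ g l = ν) ↔
      (Multiset.map l (univ : Finset (Fin e)).val).filter (· ≠ 0) = ν.parts := by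
    intro l
    constructor
    · rintro ⟨hlA, hgl⟩
      rw [Finset.mem_finsuppAntidiag] at hlA
      have hsum : (Multiset.map l (univ : Finset (Fin e)).val).sum = n := by
        rw [← hlA.1, Finset.sum]
      rw [hg] at hgl
      simp only [dif_pos hsum] at hgl
      rw [← hgl]
      rfl
    · intro hfil
      have hsum : (Multiset.map l (univ : Finset (Fin e)).val).sum = n := by
        have hsplit := Multiset.filter_add_not (· ≠ 0) (Multiset.map l (univ : Finset (Fin e)).val)
        have h2 : (Multiset.filter (fun a => ¬ a ≠ 0)
            (Multiset.map l (univ : Finset (Fin e)).val)).sum = 0 := by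
          apply Multiset.sum_eq_zero
          intro x hx
          have := Multiset.of_mem_filter hx
          simpa using this
        have := congrArg Multiset.sum hsplit
        rw [Multiset.sum_add, hfil, h2, add_zero] at this
        rw [← this, ν.parts_sum]
      constructor
      · rw [Finset.mem_finsuppAntidiag]
        exact ⟨by rw [Finset.sum]; exact hsum, Finset.subset_univ _⟩
      · rw [hg]
        simp only [dif_pos hsum]
        ext1
        rw [Nat.Partition.ofSums_parts]
        exact hfil
  -- each term in the fiber is constant
  have hterm : ∀ l ∈ A.filter (fun l => g l = ν),
      ∏ i ∈ (univ : Finset (Fin e)), (partitionFunction (l i) : ℚ) =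
        ∏ j ∈ Finset.Icc 1 n, (partitionFunction j : ℚ) ^ (ν.parts.count j) := by
    intro l hl
    rw [Finset.mem_filter] at hl
    have hfil := (hmem l).mp hl
    have h1 : ∏ i ∈ (univ : Finset (Fin e)), (partitionFunction (l i) : ℚ) =
        ((Multiset.map l (univ : Finset (Fin e)).val).map
          (fun j => (partitionFunction j : ℚ))).prod := by
      rw [Multiset.map_map, Finset.prod]
      rfl
    rw [h1, ← Multiset.filter_add_not (· ≠ 0) (Multiset.map l (univ : Finset (Fin e)).val),
      Multiset.map_add, Multiset.prod_add, hfil]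
    have h2 : ((Multiset.filter (fun a => ¬ a ≠ 0)
        (Multiset.map l (univ : Finset (Fin e)).val)).map
          (fun j => (partitionFunction j : ℚ))).prod = 1 := by
      apply Multiset.prod_eq_one
      intro x hx
      rw [Multiset.mem_map] at hx
      obtain ⟨a, ha, rfl⟩ := hx
      have : a = 0 := by simpa using Multiset.of_mem_filter ha
      rw [this, partitionFunction_zero, Nat.cast_one]
    rw [h2, mul_one]
    rw [Finset.prod_multiset_map_count]
    apply Finset.prod_subset
    · intro j hj
      rw [Multiset.mem_toFinset] at hj
      exact Finset.mem_Icc.mpr ⟨ν.parts_pos hj,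
        le_trans (Multiset.le_sum_of_mem hj) (le_of_eq ν.parts_sum)⟩
    · intro j _ hj
      rw [Multiset.count_eq_zero_of_notMem (fun h => hj (Multiset.mem_toFinset.mpr h)), pow_zero]
  rw [Finset.sum_congr rfl hterm, Finset.sum_const, nsmul_eq_mul]
  -- compute the cardinality of the fiber
  have hcard : (A.filter (fun l => g l = ν)).card =
      Nat.card {f : Fin e → ℕ // (↑(List.ofFn f) : Multiset ℕ).filter (· ≠ 0) = ν.parts} := by
    rw [← Fintype.card_coe, ← Nat.card_eq_fintype_card]
    apply Nat.card_congr
    refine Equiv.subtypeEquiv (Finsupp.equivFunOnFinite) fun l => ?_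
    rw [Finset.mem_filter, hmem l]
    have : (↑(List.ofFn (Finsupp.equivFunOnFinite l)) : Multiset ℕ) =
        Multiset.map l (univ : Finset (Fin e)).val := by
      rw [List.ofFn_eq_map]
      rfl
    rw [this]
  rw [hcard]
  -- final rational computation
  have hkey := card_partition_fiber n e ν
  have hD : (∏ i ∈ Finset.Icc 1 n, ((ν.parts.count i).factorial : ℚ)) ≠ 0 := by
    apply Finset.prod_ne_zero_iff.mpr
    intro i _
    exact_mod_cast (Nat.factorial_pos _).ne'
  rw [eq_div_iff hD]
  have hcast : (Nat.card {f : Fin e → ℕ //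
        (↑(List.ofFn f) : Multiset ℕ).filter (· ≠ 0) = ν.parts} : ℚ) *
      (∏ j ∈ Finset.Icc 1 n, ((ν.parts.count j).factorial : ℚ)) =
      (Nat.descFactorial e (Multiset.card ν.parts) : ℚ) := by
    exact_mod_cast congrArg (Nat.cast (R := ℚ)) hkey
  linear_combination (∏ j ∈ Finset.Icc 1 n,
    (partitionFunction j : ℚ) ^ (ν.parts.count j)) * hcast
end

section
/- Let e be an integer and n a natural number. In the ring of formal power series ℚ⟦q⟧, viewing each 1 - q^k (k ≥ 1) as a unit, the coefficient of q^n in the e-th integer power of the unit ∏_{k=1}^{n} (1 - q^k)⁻¹ equals the sum, over all partitions ν of n, of (∏_{i=1}^{n} p(i)^{α_i(ν)}) · (∏_{j=0}^{λ(ν)-1} (e - j)) / (α_1(ν)! ··· α_n(ν)!), where the products of e - j are taken in ℚ. (This extends the main generating-function identity to surfaces with negative Euler characteristic e.) -/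
open PowerSeries

namespace PartitionGFAux
noncomputable section
variable {α : Type*}
open Finset
open scoped Classical
open Finset.HasAntidiagonal


/-- A convenience constructor for the power series whose coefficients indicate a subset. -/
def indicatorSeries (α : Type*) [Semiring α] (s : Set ℕ) : PowerSeries α :=
  PowerSeries.mk fun n => if n ∈ s then 1 else 0

theorem coeff_indicator (s : Set ℕ) [Semiring α] (n : ℕ) :
    coeff (R := α) n (indicatorSeries _ s) = if n ∈ s then 1 else 0 :=
  coeff_mk _ _

theorem coeff_indicator_pos (s : Set ℕ) [Semiring α] (n : ℕ) (h : n ∈ s) :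
    coeff (R := α) n (indicatorSeries _ s) = 1 := by rw [coeff_indicator, if_pos h]

theorem coeff_indicator_neg (s : Set ℕ) [Semiring α] (n : ℕ) (h : n ∉ s) :
    coeff (R := α) n (indicatorSeries _ s) = 0 := by rw [coeff_indicator, if_neg h]

theorem constantCoeff_indicator (s : Set ℕ) [Semiring α] :
    constantCoeff (R := α) (indicatorSeries _ s) = if 0 ∈ s then 1 else 0 :=
  rfl

theorem two_series (i : ℕ) [Semiring α] :
    1 + (X : PowerSeries α) ^ i.succ = indicatorSeries α {0, i.succ} := by
  ext n
  simp only [coeff_indicator, coeff_one, coeff_X_pow, Set.mem_insert_iff, Set.mem_singleton_iff,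
    map_add]
  cases' n with d
  · simp [(Nat.succ_ne_zero i).symm]
  · simp [Nat.succ_ne_zero d]

theorem num_series' [Field α] (i : ℕ) :
    (1 - (X : PowerSeries α) ^ (i + 1))⁻¹ = indicatorSeries α {k | i + 1 ∣ k} := by
  rw [PowerSeries.inv_eq_iff_mul_eq_one]
  · ext n
    cases n with
    | zero => simp [mul_sub, zero_pow, constantCoeff_indicator]
    | succ n =>
      simp only [coeff_one, if_false, mul_sub, mul_one, coeff_indicator,
        LinearMap.map_sub, reduceCtorEq]
      simp_rw [coeff_mul, coeff_X_pow, coeff_indicator, @boole_mul _ _ _ _]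
      erw [@sum_ite _ _ _ _ _ (fun _ => Classical.propDecidable _), sum_ite]
      simp_rw [@filter_filter _ _ _ _ _, sum_const_zero, add_zero, sum_const, nsmul_eq_mul, mul_one,
        sub_eq_iff_eq_add, zero_add]
      symm
      split_ifs with h
      · suffices #{a ∈ antidiagonal (n + 1) | i + 1 ∣ a.fst ∧ a.snd = i + 1} = 1 by
          simp only [Set.mem_setOf_eq]; convert congr_arg ((↑) : ℕ → α) this; norm_cast
        rw [card_eq_one]
        cases' h with p hp
        refine ⟨((i + 1) * (p - 1), i + 1), ?_⟩
        ext ⟨a₁, a₂⟩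
        simp only [mem_filter, Prod.mk_inj, HasAntidiagonal.mem_antidiagonal, mem_singleton]
        constructor
        · rintro ⟨a_left, ⟨a, rfl⟩, rfl⟩
          refine ⟨?_, rfl⟩
          rw [Nat.mul_sub_left_distrib, ← hp, ← a_left, mul_one, Nat.add_sub_cancel]
        · rintro ⟨rfl, rfl⟩
          match p with
          | 0 => rw [mul_zero] at hp; cases hp
          | p + 1 => rw [hp]; simp [mul_add]
      · suffices #{a ∈ antidiagonal (n + 1) | i + 1 ∣ a.fst ∧ a.snd = i + 1} = 0 by
          simp only [Set.mem_setOf_eq]; convert congr_arg ((↑) : ℕ → α) this; norm_cast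
        rw [card_eq_zero]
        apply eq_empty_of_forall_notMem
        simp only [Prod.forall, mem_filter, not_and, HasAntidiagonal.mem_antidiagonal]
        rintro _ h₁ h₂ ⟨a, rfl⟩ rfl
        apply h
        simp [← h₂]
  · simp [zero_pow]

def mkOdd : ℕ ↪ ℕ :=
  ⟨fun i => 2 * i + 1, fun x y h => by linarith⟩

-- The main workhorse of the partition theorem proof.
theorem partialGF_prop (α : Type*) [CommSemiring α] (n : ℕ) (s : Finset ℕ) (hs : ∀ i ∈ s, 0 < i)
    (c : ℕ → Set ℕ) (hc : ∀ i, i ∉ s → 0 ∈ c i) :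
    #{p : n.Partition | (∀ j, p.parts.count j ∈ c j) ∧ ∀ j ∈ p.parts, j ∈ s} =
      coeff (R := α) n (∏ i ∈ s, indicatorSeries α ((· * i) '' c i)) := by
  simp_rw [coeff_prod, coeff_indicator, prod_boole, sum_boole]
  apply congr_arg
  simp only [mem_univ, forall_true_left, not_and, not_forall, exists_prop,
    Set.mem_image, not_exists]
  set φ : (a : Nat.Partition n) →
    a ∈ filter (fun p ↦ (∀ (j : ℕ), Multiset.count j p.parts ∈ c j) ∧ ∀ j ∈ p.parts, j ∈ s) univ →
    ℕ →₀ ℕ := fun p _ => {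
      toFun := fun i => Multiset.count i p.parts • i
      support := Finset.filter (fun i => i ≠ 0) p.parts.toFinset
      mem_support_toFun := fun a => by
        simp only [smul_eq_mul, ne_eq, mul_eq_zero, Multiset.count_eq_zero]
        rw [not_or, not_not]
        simp only [Multiset.mem_toFinset, not_not, mem_filter] }
  refine Finset.card_bij φ ?_ ?_ ?_
  · intro a ha
    simp only [φ, not_forall, not_exists, not_and, exists_prop, mem_filter]
    rw [mem_finsuppAntidiag]
    dsimp only [ne_eq, smul_eq_mul, id_eq, eq_mpr_eq_cast, le_eq_subset, Finsupp.coe_mk]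
    simp only [mem_univ, forall_true_left, not_and, not_forall, exists_prop,
      mem_filter, true_and] at ha
    refine ⟨⟨?_, fun i ↦ ?_⟩, fun i _ ↦ ⟨a.parts.count i, ha.1 i, rfl⟩⟩
    · conv_rhs => simp [← a.parts_sum]
      rw [sum_multiset_count_of_subset _ s]
      · simp only [smul_eq_mul]
      · intro i
        simp only [Multiset.mem_toFinset, not_not, mem_filter]
        apply ha.2
    · simp only [ne_eq, Multiset.mem_toFinset, not_not, mem_filter, and_imp]
      exact fun hi _ ↦ ha.2 i hi
  · intro p₁ hp₁ p₂ hp₂ h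
    apply Nat.Partition.ext
    simp only [true_and, mem_univ, mem_filter] at hp₁ hp₂
    ext i
    simp only [φ, ne_eq, Multiset.mem_toFinset, not_not, smul_eq_mul, Finsupp.mk.injEq] at h
    by_cases hi : i = 0
    · rw [hi]
      rw [Multiset.count_eq_zero_of_notMem]
      · rw [Multiset.count_eq_zero_of_notMem]
        intro a; exact Nat.lt_irrefl 0 (hs 0 (hp₂.2 0 a))
      intro a; exact Nat.lt_irrefl 0 (hs 0 (hp₁.2 0 a))
    · rw [← mul_left_inj' hi]
      rw [funext_iff] at h
      exact h.2 i
  · simp only [φ, mem_filter, mem_finsuppAntidiag, mem_univ, exists_prop, true_and, and_assoc]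
    rintro f ⟨hf, hf₃, hf₄⟩
    have hf' : f ∈ finsuppAntidiag s n := mem_finsuppAntidiag.mpr ⟨hf, hf₃⟩
    simp only [mem_finsuppAntidiag] at hf'
    refine ⟨⟨∑ i ∈ s, Multiset.replicate (f i / i) i, ?_, ?_⟩, ?_, ?_, ?_⟩
    · intro i hi
      simp only [exists_prop, Multiset.mem_sum, mem_map, Function.Embedding.coeFn_mk] at hi
      rcases hi with ⟨t, ht, z⟩
      apply hs
      rwa [Multiset.eq_of_mem_replicate z]
    · simp_rw [Multiset.sum_sum, Multiset.sum_replicate, Nat.nsmul_eq_mul]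
      rw [← hf'.1]
      refine sum_congr rfl fun i hi => Nat.div_mul_cancel ?_
      rcases hf₄ i hi with ⟨w, _, hw₂⟩
      rw [← hw₂]
      exact dvd_mul_left _ _
    · intro i
      simp_rw [Multiset.count_sum', Multiset.count_replicate, sum_ite_eq']
      split_ifs with h
      · rcases hf₄ i h with ⟨w, hw₁, hw₂⟩
        rwa [← hw₂, Nat.mul_div_cancel _ (hs i h)]
      · exact hc _ h
    · intro i hi
      rw [Multiset.mem_sum] at hi
      rcases hi with ⟨j, hj₁, hj₂⟩
      rwa [Multiset.eq_of_mem_replicate hj₂]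
    · ext i
      simp_rw [Multiset.count_sum', Multiset.count_replicate, sum_ite_eq']
      simp only [ne_eq, Multiset.mem_toFinset, not_not, smul_eq_mul, ite_mul,
        zero_mul, Finsupp.coe_mk]
      split_ifs with h
      · apply Nat.div_mul_cancel
        rcases hf₄ i h with ⟨w, _, hw₂⟩
        apply Dvd.intro_left _ hw₂
      · apply symm
        rw [← Finsupp.notMem_support_iff]
        exact notMem_mono hf'.2 h


theorem coeff_prod_inv (n m : ℕ) (hm : m ≤ n) :
    coeff (R := ℚ) m (∏ k ∈ Finset.Icc 1 n, (1 - X ^ k : PowerSeries ℚ)⁻¹) =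
      partitionFunction m := by
  have h1 : ∀ k ∈ Finset.Icc 1 n, (1 - X ^ k : PowerSeries ℚ)⁻¹
      = indicatorSeries ℚ ((· * k) '' Set.univ) := by
    intro k hk
    obtain ⟨i, rfl⟩ : ∃ i, k = i + 1 := ⟨k - 1, (Nat.succ_pred_eq_of_pos (mem_Icc.1 hk).1).symm⟩
    have hset : ((· * (i + 1)) '' Set.univ) = {k | i + 1 ∣ k} := by
      rw [Set.image_univ]
      ext x
      simp only [Set.mem_range, Set.mem_setOf_eq]
      constructor
      · rintro ⟨c, rfl⟩; exact Dvd.intro_left c rfl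
      · rintro ⟨c, rfl⟩; exact ⟨c, mul_comm _ _⟩
    rw [num_series', hset]
  rw [Finset.prod_congr rfl h1,
    ← partialGF_prop ℚ m (Finset.Icc 1 n) (fun i hi => (mem_Icc.1 hi).1) (fun _ => Set.univ)
      (fun _ _ => Set.mem_univ _)]
  rw [Finset.filter_true_of_mem, Finset.card_univ]
  · rfl
  intro p _
  refine ⟨fun j => Set.mem_univ _, fun j hj => mem_Icc.2 ⟨p.parts_pos hj, le_trans ?_ hm⟩⟩
  exact le_trans (Multiset.le_sum_of_mem hj) (le_of_eq p.parts_sum)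


/-- Generalized binomial coefficient `e choose j` for integer `e`. -/
def rr (e : ℤ) (j : ℕ) : ℚ := (∏ i ∈ Finset.range j, ((e : ℚ) - i)) / (Nat.factorial j)

lemma rr_zero (e : ℤ) : rr e 0 = 1 := by simp [rr]

lemma rr_zero_succ (j : ℕ) : rr 0 (j + 1) = 0 := by
  unfold rr
  rw [Finset.prod_eq_zero (Finset.mem_range.2 (Nat.succ_pos j))]
  · simp
  · simp

lemma rr_pascal (e : ℤ) (j : ℕ) : rr (e + 1) (j + 1) = rr e (j + 1) + rr e j := by
  have h1 : ∏ i ∈ range (j + 1), (((e : ℤ) + 1 : ℤ) - i : ℚ) =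
      ((e : ℚ) + 1) * ∏ i ∈ range j, ((e : ℚ) - i) := by
    rw [Finset.prod_range_succ']
    have hc : ∀ i ∈ range j, (((e + 1 : ℤ) : ℚ) - (((i : ℕ) + 1 : ℕ) : ℚ)) = (e : ℚ) - i := by
      intros; push_cast; ring
    rw [Finset.prod_congr rfl hc]
    push_cast
    ring
  have hj : ((j.factorial : ℚ)) ≠ 0 := Nat.cast_ne_zero.2 j.factorial_ne_zero
  have hj1 : (((j+1).factorial : ℚ)) ≠ 0 := Nat.cast_ne_zero.2 (j+1).factorial_ne_zero
  have h2 : (((j + 1).factorial : ℕ) : ℚ) = (j + 1) * j.factorial := by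
    rw [Nat.factorial_succ]; push_cast; ring
  unfold rr
  push_cast at h1 ⊢
  rw [h1, Finset.prod_range_succ, h2]
  field_simp
  ring

lemma key_mul (V : PowerSeries ℚ) (n : ℕ) (e : ℤ) :
    (∑ j ∈ range (n + 1), C (R := ℚ) (rr e j) * V ^ j) * (1 + V)
      = (∑ j ∈ range (n + 1), C (R := ℚ) (rr (e + 1) j) * V ^ j) + C (R := ℚ) (rr e n) * V ^ (n + 1) := by
  rw [mul_add, mul_one, Finset.sum_mul]
  have h1 : ∀ j, C (R := ℚ) (rr e j) * V ^ j * V = C (R := ℚ) (rr e j) * V ^ (j + 1) := fun j => by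
    rw [mul_assoc, ← pow_succ]
  simp_rw [h1]
  rw [Finset.sum_range_succ (fun j => C (R := ℚ) (rr e j) * V ^ (j + 1)) n,
    Finset.sum_range_succ' (fun j => C (R := ℚ) (rr (e + 1) j) * V ^ j) n,
    Finset.sum_range_succ' (fun j => C (R := ℚ) (rr e j) * V ^ j) n]
  have h2 : ∀ j, C (R := ℚ) (rr e (j + 1)) * V ^ (j + 1) + C (R := ℚ) (rr e j) * V ^ (j + 1)
      = C (R := ℚ) (rr (e + 1) (j + 1)) * V ^ (j + 1) := fun j => by
    rw [rr_pascal, map_add, add_mul]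
  calc (∑ j ∈ range n, C (R := ℚ) (rr e (j + 1)) * V ^ (j + 1) + C (R := ℚ) (rr e 0) * V ^ 0)
        + (∑ j ∈ range n, C (R := ℚ) (rr e j) * V ^ (j + 1) + C (R := ℚ) (rr e n) * V ^ (n + 1))
      = (∑ j ∈ range n, (C (R := ℚ) (rr e (j + 1)) * V ^ (j + 1) + C (R := ℚ) (rr e j) * V ^ (j + 1)))
        + C (R := ℚ) (rr e 0) * V ^ 0 + C (R := ℚ) (rr e n) * V ^ (n + 1) := by
        rw [Finset.sum_add_distrib]; ring
    _ = ∑ j ∈ range n, C (R := ℚ) (rr (e + 1) (j + 1)) * V ^ (j + 1) + C (R := ℚ) (rr (e + 1) 0) * V ^ 0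
        + C (R := ℚ) (rr e n) * V ^ (n + 1) := by
        simp_rw [h2]; rw [rr_zero, rr_zero]

lemma zpow_sub_sum_dvd (n : ℕ) (u : (PowerSeries ℚ)ˣ) (V : PowerSeries ℚ)
    (hV : (u : PowerSeries ℚ) = 1 + V) (hX : (X : PowerSeries ℚ) ∣ V) (e : ℤ) :
    (X : PowerSeries ℚ) ^ (n + 1) ∣ ((u ^ e : (PowerSeries ℚ)ˣ) : PowerSeries ℚ)
      - ∑ j ∈ range (n + 1), C (R := ℚ) (rr e j) * V ^ j := by
  have hXV : (X : PowerSeries ℚ) ^ (n + 1) ∣ V ^ (n + 1) := pow_dvd_pow_of_dvd hX _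
  induction e using Int.induction_on with
  | zero =>
      have : ∑ j ∈ range (n + 1), C (R := ℚ) (rr 0 j) * V ^ j = 1 := by
        rw [Finset.sum_range_succ' (fun j => C (R := ℚ) (rr 0 j) * V ^ j) n]
        simp [rr_zero, rr_zero_succ]
      rw [this]
      simp
  | succ k ih =>
      have hu1 : ((u ^ ((k : ℤ) + 1) : (PowerSeries ℚ)ˣ) : PowerSeries ℚ)
          = (1 + V) * ((u ^ (k : ℤ) : (PowerSeries ℚ)ˣ) : PowerSeries ℚ) := by
        rw [zpow_add_one, Units.val_mul, hV, mul_comm]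
      have h2 : ((u ^ ((k : ℤ) + 1) : (PowerSeries ℚ)ˣ) : PowerSeries ℚ)
            - ∑ j ∈ range (n + 1), C (R := ℚ) (rr ((k : ℤ) + 1) j) * V ^ j
          = (1 + V) * (((u ^ (k : ℤ) : (PowerSeries ℚ)ˣ) : PowerSeries ℚ)
              - ∑ j ∈ range (n + 1), C (R := ℚ) (rr (k : ℤ) j) * V ^ j)
            + C (R := ℚ) (rr (k : ℤ) n) * V ^ (n + 1) := by
        rw [hu1]
        linear_combination key_mul V n (k : ℤ)
      rw [h2]
      exact dvd_add (Dvd.dvd.mul_left ih _) (Dvd.dvd.mul_left hXV _)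
  | pred k ih =>
      set e : ℤ := -(k : ℤ) with he
      have hkey := key_mul V n (e - 1)
      rw [sub_add_cancel] at hkey
      rw [← Units.dvd_mul_right (u := u)]
      have hA : ((u ^ (e - 1) : (PowerSeries ℚ)ˣ) : PowerSeries ℚ) * u
          = ((u ^ e : (PowerSeries ℚ)ˣ) : PowerSeries ℚ) := by
        rw [← Units.val_mul, zpow_sub_one, inv_mul_cancel_right]
      have h2 : (((u ^ (e - 1) : (PowerSeries ℚ)ˣ) : PowerSeries ℚ)
            - ∑ j ∈ range (n + 1), C (R := ℚ) (rr (e - 1) j) * V ^ j) * u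
          = (((u ^ e : (PowerSeries ℚ)ˣ) : PowerSeries ℚ)
              - ∑ j ∈ range (n + 1), C (R := ℚ) (rr e j) * V ^ j)
            - C (R := ℚ) (rr (e - 1) n) * V ^ (n + 1) := by
        rw [sub_mul, hA, hV]
        linear_combination - hkey
      rw [h2]
      exact dvd_sub ih (Dvd.dvd.mul_left hXV _)


lemma partitionFunction_zero : partitionFunction 0 = 1 :=
  Fintype.card_eq_one_iff.2 ⟨⟨0, by simp, rfl⟩, fun y => Nat.Partition.ext (by simp)⟩

lemma coeff_zpow_eq (n : ℕ) (u : (PowerSeries ℚ)ˣ)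
    (hu : (u : PowerSeries ℚ) = ∏ k ∈ Finset.Icc 1 n, (1 - X ^ k : PowerSeries ℚ)⁻¹) (e : ℤ) :
    coeff (R := ℚ) n ((u ^ e : (PowerSeries ℚ)ˣ) : PowerSeries ℚ)
      = ∑ j ∈ range (n + 1), rr e j *
          coeff (R := ℚ) n ((∑ m ∈ Finset.Icc 1 n, C (R := ℚ) ((partitionFunction m : ℚ)) * X ^ m) ^ j) := by
  set W : PowerSeries ℚ := ∑ m ∈ Finset.Icc 1 n, C (R := ℚ) ((partitionFunction m : ℚ)) * X ^ m with hW
  set V : PowerSeries ℚ := (u : PowerSeries ℚ) - 1 with hVdef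
  have hcu : ∀ m, m ≤ n → coeff (R := ℚ) m (u : PowerSeries ℚ) = partitionFunction m := by
    intro m hm; rw [hu]; exact coeff_prod_inv n m hm
  have hV : (u : PowerSeries ℚ) = 1 + V := by rw [hVdef]; ring
  have hWc : ∀ m, coeff (R := ℚ) m W = if m ∈ Finset.Icc 1 n then (partitionFunction m : ℚ) else 0 := by
    intro m
    rw [hW, map_sum]
    have hterm : ∀ i ∈ Finset.Icc 1 n, coeff (R := ℚ) m (C (R := ℚ) ((partitionFunction i : ℚ)) * X ^ i)
        = if m = i then (partitionFunction i : ℚ) else 0 := by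
      intro i _
      rw [coeff_C_mul, coeff_X_pow, mul_ite, mul_one, mul_zero]
    rw [Finset.sum_congr rfl hterm, Finset.sum_ite_eq]
  have hc0 : constantCoeff (R := ℚ) V = 0 := by
    have h0 := hcu 0 (Nat.zero_le n)
    rw [← coeff_zero_eq_constantCoeff, hVdef, map_sub, h0, partitionFunction_zero]
    simp
  have hX : (X : PowerSeries ℚ) ∣ V := X_dvd_iff.2 hc0
  have hVW : (X : PowerSeries ℚ) ^ (n + 1) ∣ V - W := by
    rw [X_pow_dvd_iff]
    intro m hm
    rw [map_sub, hWc m, hVdef, map_sub]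
    rcases Nat.eq_zero_or_pos m with rfl | hm0
    · rw [hcu 0 (Nat.zero_le n), partitionFunction_zero]
      simp
    · rw [hcu m (by omega), coeff_one, if_neg (by omega),
        if_pos (Finset.mem_Icc.2 ⟨hm0, by omega⟩)]
      ring
  have hdvd := zpow_sub_sum_dvd n u V hV hX e
  rw [X_pow_dvd_iff] at hdvd
  have h1 := hdvd n (by omega)
  rw [map_sub, sub_eq_zero] at h1
  rw [h1, map_sum]
  apply Finset.sum_congr rfl
  intro j _
  rw [coeff_C_mul]
  congr 1
  have h2 : (X : PowerSeries ℚ) ^ (n + 1) ∣ V ^ j - W ^ j :=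
    dvd_trans hVW (sub_dvd_pow_sub_pow V W j)
  rw [X_pow_dvd_iff] at h2
  have h3 := h2 n (by omega)
  rw [map_sub, sub_eq_zero] at h3
  exact h3

lemma coeff_W_pow (n j : ℕ) :
    coeff (R := ℚ) n ((∑ m ∈ Finset.Icc 1 n, C (R := ℚ) ((partitionFunction m : ℚ)) * X ^ m) ^ j)
      = ∑ k ∈ (Finset.Icc 1 n).piAntidiag j,
          (if ∑ m ∈ Finset.Icc 1 n, m * k m = n then
            (Nat.multinomial (Finset.Icc 1 n) k : ℚ) *
              ∏ m ∈ Finset.Icc 1 n, (partitionFunction m : ℚ) ^ (k m) else 0) := by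
  rw [Finset.sum_pow_eq_sum_piAntidiag, map_sum]
  apply Finset.sum_congr rfl
  intro k hk
  have hprod : ∏ m ∈ Finset.Icc 1 n, (C (R := ℚ) ((partitionFunction m : ℚ)) * X ^ m) ^ (k m)
      = C (R := ℚ) (∏ m ∈ Finset.Icc 1 n, (partitionFunction m : ℚ) ^ (k m))
          * X ^ (∑ m ∈ Finset.Icc 1 n, m * k m) := by
    have hterm : ∀ m ∈ Finset.Icc 1 n, (C (R := ℚ) ((partitionFunction m : ℚ)) * X ^ m) ^ (k m)
        = C (R := ℚ) ((partitionFunction m : ℚ) ^ (k m)) * X ^ (m * k m) := by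
      intro m _
      rw [mul_pow, ← map_pow, ← pow_mul]
    rw [Finset.prod_congr rfl hterm, Finset.prod_mul_distrib, map_prod,
      Finset.prod_pow_eq_pow_sum]
  rw [hprod, ← mul_assoc, show ((Nat.multinomial (Finset.Icc 1 n) k : PowerSeries ℚ))
      = C (R := ℚ) ((Nat.multinomial (Finset.Icc 1 n) k : ℚ)) by rw [map_natCast], ← map_mul,
    coeff_C_mul, coeff_X_pow, mul_ite, mul_one, mul_zero]
  by_cases h : ∑ m ∈ Finset.Icc 1 n, m * k m = n
  · rw [if_pos h, if_pos h.symm]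
  · rw [if_neg h, if_neg fun hc => h hc.symm]

lemma parts_mem_Icc {n : ℕ} (ν : Nat.Partition n) : ∀ i ∈ ν.parts, i ∈ Finset.Icc 1 n :=
  fun i hi =>
    Finset.mem_Icc.2 ⟨ν.parts_pos hi, (Multiset.le_sum_of_mem hi).trans_eq ν.parts_sum⟩

lemma sum_count_eq_card {n : ℕ} (ν : Nat.Partition n) :
    ∑ i ∈ Finset.Icc 1 n, ν.parts.count i = Multiset.card ν.parts := by
  rw [← Multiset.toFinset_sum_count_eq]
  exact (Finset.sum_subset (fun i hi => parts_mem_Icc ν i (Multiset.mem_toFinset.1 hi))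
    (fun i _ hi => Multiset.count_eq_zero_of_notMem
      (fun h => hi (Multiset.mem_toFinset.2 h)))).symm

lemma sum_mul_count {n : ℕ} (ν : Nat.Partition n) :
    ∑ i ∈ Finset.Icc 1 n, i * ν.parts.count i = n := by
  have h := Finset.sum_multiset_count_of_subset ν.parts (Finset.Icc 1 n)
      (fun i hi => parts_mem_Icc ν i (Multiset.mem_toFinset.1 hi))
  rw [ν.parts_sum] at h
  exact (Finset.sum_congr rfl fun i _ => by rw [smul_eq_mul, mul_comm]).trans h.symm

lemma card_parts_le {n : ℕ} (ν : Nat.Partition n) : Multiset.card ν.parts ≤ n := by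
  have h := Multiset.card_nsmul_le_sum (fun x hx => ν.parts_pos hx)
  have h2 := ν.parts_sum
  simp only [smul_eq_mul] at h
  omega

/-- The partition associated to a multiplicity function. -/
def toPart (n : ℕ) (k : ℕ → ℕ) (hkn : ∑ m ∈ Finset.Icc 1 n, m * k m = n) : Nat.Partition n :=
  Nat.Partition.ofSums n (∑ m ∈ Finset.Icc 1 n, Multiset.replicate (k m) m) (by
    have hs : (∑ m ∈ Finset.Icc 1 n, Multiset.replicate (k m) m).sum
        = ∑ m ∈ Finset.Icc 1 n, k m * m := by
      simp_rw [Multiset.sum_sum, Multiset.sum_replicate, Nat.nsmul_eq_mul]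
    rw [hs]
    exact (Finset.sum_congr rfl fun i _ => mul_comm _ _).trans hkn)

lemma count_toPart (n : ℕ) (k : ℕ → ℕ) (hkn : ∑ m ∈ Finset.Icc 1 n, m * k m = n)
    (hk0 : ∀ i, k i ≠ 0 → i ∈ Finset.Icc 1 n) (i : ℕ) :
    (toPart n k hkn).parts.count i = k i := by
  have hout : i ∉ Finset.Icc 1 n → k i = 0 := fun h => by
    by_contra h'; exact h (hk0 i h')
  rcases Nat.eq_zero_or_pos i with rfl | hi0
  · rw [toPart, Nat.Partition.count_ofSums_zero]
    exact (hout (by simp)).symm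
  · rw [toPart, Nat.Partition.count_ofSums_of_ne_zero _ (by omega)]
    rw [Multiset.count_sum']
    simp_rw [Multiset.count_replicate]
    rw [Finset.sum_ite_eq']
    split_ifs with h
    · rfl
    · exact (hout h).symm

lemma sum_over_k (n : ℕ) (e : ℤ) (j : ℕ) :
    ∑ k ∈ Finset.filter (fun k => ∑ m ∈ Finset.Icc 1 n, m * k m = n)
        ((Finset.Icc 1 n).piAntidiag j),
      rr e j * ((Nat.multinomial (Finset.Icc 1 n) k : ℚ) *
        ∏ m ∈ Finset.Icc 1 n, (partitionFunction m : ℚ) ^ (k m))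
    = ∑ ν ∈ Finset.filter (fun ν : Nat.Partition n => Multiset.card ν.parts = j) Finset.univ,
        (∏ i ∈ Finset.Icc 1 n, (partitionFunction i : ℚ) ^ (ν.parts.count i)) *
          (∏ t ∈ Finset.range (Multiset.card ν.parts), ((e : ℚ) - t)) /
          (∏ i ∈ Finset.Icc 1 n, ((ν.parts.count i).factorial : ℚ)) := by
  refine Finset.sum_bij' (i := fun k hk => toPart n k (Finset.mem_filter.1 hk).2)
    (j := fun ν _ => fun i => ν.parts.count i) ?_ ?_ ?_ ?_ ?_
  · -- forward maps into target
    intro k hk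
    obtain ⟨hk1, hk2⟩ := Finset.mem_filter.1 hk
    rw [Finset.mem_piAntidiag] at hk1
    rw [Finset.mem_filter]
    refine ⟨Finset.mem_univ _, ?_⟩
    rw [← sum_count_eq_card (toPart n k hk2), ← hk1.1]
    exact Finset.sum_congr rfl fun i _ => count_toPart n k hk2 hk1.2 i
  · -- backward maps into source
    intro ν hν
    rw [Finset.mem_filter] at hν
    rw [Finset.mem_filter, Finset.mem_piAntidiag]
    refine ⟨⟨?_, ?_⟩, sum_mul_count ν⟩
    · rw [sum_count_eq_card ν, hν.2]
    · intro i hi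
      exact parts_mem_Icc ν i (Multiset.count_ne_zero.1 hi)
  · -- left inverse
    intro k hk
    obtain ⟨hk1, hk2⟩ := Finset.mem_filter.1 hk
    rw [Finset.mem_piAntidiag] at hk1
    funext i
    exact count_toPart n k hk2 hk1.2 i
  · -- right inverse
    intro ν hν
    apply Nat.Partition.ext
    rw [Multiset.ext]
    intro i
    exact count_toPart n _ (sum_mul_count ν)
      (fun i hi => parts_mem_Icc ν i (Multiset.count_ne_zero.1 hi)) i
  · -- values agree
    intro k hk
    obtain ⟨hk1, hk2⟩ := Finset.mem_filter.1 hk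
    rw [Finset.mem_piAntidiag] at hk1
    have hcount : ∀ i, (toPart n k hk2).parts.count i = k i := count_toPart n k hk2 hk1.2
    have hcard : Multiset.card (toPart n k hk2).parts = j := by
      rw [← sum_count_eq_card (toPart n k hk2), ← hk1.1]
      exact Finset.sum_congr rfl fun i _ => hcount i
    simp_rw [hcount, hcard]
    have hspec := Nat.multinomial_spec (Finset.Icc 1 n) k
    rw [hk1.1] at hspec
    have hfac : (∏ i ∈ Finset.Icc 1 n, ((k i).factorial : ℚ)) *
        (Nat.multinomial (Finset.Icc 1 n) k : ℚ) = (j.factorial : ℚ) := by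
      rw [← Nat.cast_prod, ← Nat.cast_mul, hspec]
    have hfne : (∏ i ∈ Finset.Icc 1 n, ((k i).factorial : ℚ)) ≠ 0 :=
      Finset.prod_ne_zero_iff.2 fun i _ => Nat.cast_ne_zero.2 (k i).factorial_ne_zero
    have hjne : ((j.factorial : ℕ) : ℚ) ≠ 0 := Nat.cast_ne_zero.2 j.factorial_ne_zero
    rw [rr]
    field_simp
    rw [← hfac]
    ring

end
end PartitionGFAux


/-- For an integer `e`, the coefficient of `q^n` in the `e`-th integer power of the unit
`∏_{k=1}^n (1 - q^k)⁻¹ ∈ ℚ⟦q⟧ˣ` equals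
`∑_{ν ⊢ n} (∏_i p(i)^{α_i(ν)}) · (∏_{j=0}^{λ(ν)-1} (e - j)) / (α_1(ν)! ⋯ α_n(ν)!)`. -/
theorem coeff_zpow_unit_eq_sum_partitions (e : ℤ) (n : ℕ) (u : (PowerSeries ℚ)ˣ)
    (hu : (u : PowerSeries ℚ) = ∏ k ∈ Finset.Icc 1 n, (1 - PowerSeries.X ^ k : PowerSeries ℚ)⁻¹) :
    PowerSeries.coeff (R := ℚ) n ((u ^ e : (PowerSeries ℚ)ˣ) : PowerSeries ℚ) =
      ∑ ν : Nat.Partition n,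
        (∏ i ∈ Finset.Icc 1 n, (partitionFunction i : ℚ) ^ (ν.parts.count i)) *
          (∏ j ∈ Finset.range (Multiset.card ν.parts), ((e : ℚ) - (j : ℚ))) /
          (∏ i ∈ Finset.Icc 1 n, ((ν.parts.count i).factorial : ℚ)) := by
  classical
  rw [PartitionGFAux.coeff_zpow_eq n u hu e]
  have h1 : ∀ j ∈ Finset.range (n + 1),
      PartitionGFAux.rr e j * PowerSeries.coeff (R := ℚ) n ((∑ m ∈ Finset.Icc 1 n,
        PowerSeries.C (R := ℚ) ((partitionFunction m : ℚ)) * PowerSeries.X ^ m) ^ j)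
      = ∑ ν ∈ Finset.filter (fun ν : Nat.Partition n => Multiset.card ν.parts = j) Finset.univ,
          (∏ i ∈ Finset.Icc 1 n, (partitionFunction i : ℚ) ^ (ν.parts.count i)) *
            (∏ t ∈ Finset.range (Multiset.card ν.parts), ((e : ℚ) - t)) /
            (∏ i ∈ Finset.Icc 1 n, ((ν.parts.count i).factorial : ℚ)) := by
    intro j _
    rw [PartitionGFAux.coeff_W_pow, ← Finset.sum_filter, Finset.mul_sum]
    exact PartitionGFAux.sum_over_k n e j
  rw [Finset.sum_congr rfl h1]
  exact Finset.sum_fiberwise_of_maps_to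
    (fun ν _ => Finset.mem_range.2 (Nat.lt_succ_of_le (PartitionGFAux.card_parts_le ν))) _
end

section
/- Let e and n be natural numbers. Then ∑_{ν ⊢ n} e·(e-1)···(e-(λ(ν)-1)) / (α_1(ν)! ··· α_n(ν)!) = binomial(e + n - 1, n), where the sum is over all partitions ν of n and the left-hand side is computed in ℚ. Equivalently, the coefficient of q^n in ((1 - q)⁻¹)^e ∈ ℚ⟦q⟧ equals ∑_{ν ⊢ n} e·(e-1)···(e-(λ(ν)-1)) / (α_1(ν)! ··· α_n(ν)!). (This is Macdonald's formula for Euler characteristics of symmetric products, derived from the stratum count and the multinomial expansion.) -/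
open Finset Multiset

/-- The partition sum of Macdonald's formula, as a function of `e` and `n`. -/
noncomputable def macS (e n : ℕ) : ℚ :=
  ∑ ν : Nat.Partition n,
    (Nat.descFactorial e (Multiset.card ν.parts) : ℚ) /
      (∏ i ∈ Finset.Icc 1 n, ((ν.parts.count i).factorial : ℚ))

lemma mac_parts_mem_Icc {n : ℕ} (ν : Nat.Partition n) {i : ℕ} (h : i ∈ ν.parts) :
    i ∈ Finset.Icc 1 n := by
  rw [Finset.mem_Icc]
  exact ⟨ν.parts_pos h, (Multiset.le_sum_of_mem h).trans_eq ν.parts_sum⟩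

lemma mac_prod_ext {n N : ℕ} (h : n ≤ N) (ν : Nat.Partition n) :
    ∏ i ∈ Finset.Icc 1 N, ((ν.parts.count i).factorial : ℚ)
      = ∏ i ∈ Finset.Icc 1 n, ((ν.parts.count i).factorial : ℚ) := by
  refine (Finset.prod_subset (Finset.Icc_subset_Icc_right h) fun x _ hx => ?_).symm
  have : ν.parts.count x = 0 := Multiset.count_eq_zero.2 fun hm => hx (mac_parts_mem_Icc ν hm)
  simp [this]

lemma mac_card_eq {n : ℕ} (ν : Nat.Partition n) :
    (Multiset.card ν.parts : ℚ) = ∑ i ∈ Finset.Icc 1 n, (ν.parts.count i : ℚ) := by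
  have h1 : ∑ i ∈ ν.parts.toFinset, ν.parts.count i = Multiset.card ν.parts :=
    Multiset.toFinset_sum_count_eq _
  have h2 : ∑ i ∈ ν.parts.toFinset, ν.parts.count i
      = ∑ i ∈ Finset.Icc 1 n, ν.parts.count i := by
    refine Finset.sum_subset (fun x hx => mac_parts_mem_Icc ν (Multiset.mem_toFinset.1 hx))
      fun x _ hx => Multiset.count_eq_zero.2 fun hm => hx (Multiset.mem_toFinset.2 hm)
  rw [← h1, h2]
  push_cast
  rfl

lemma mac_descFactorial_succ_left (e k : ℕ) :
    (e + 1).descFactorial k = e.descFactorial k + k * e.descFactorial (k - 1) := by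
  cases k with
  | zero => simp
  | succ k =>
    rw [Nat.succ_descFactorial_succ, Nat.descFactorial_succ, Nat.add_sub_cancel]
    rcases le_or_gt k e with h | h
    · have : e - k + (k + 1) = e + 1 := by omega
      nlinarith [this]
    · rw [Nat.descFactorial_eq_zero_iff_lt.2 h]
      omega

lemma mac_sum_choose (e n : ℕ) :
    ∑ m ∈ Finset.range (n + 1), (e + m - 1).choose m = (e + n).choose n := by
  induction n with
  | zero => simp
  | succ n ih =>
    rw [Finset.sum_range_succ, ih]
    have h1 : e + (n + 1) - 1 = e + n := by omega
    rw [h1, ← Nat.choose_succ_succ', ← Nat.add_assoc]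

/-- Remove one part equal to `i` from a partition of `n`. -/
def macErase {n : ℕ} (i : ℕ) (ν : Nat.Partition n) (h : i ∈ ν.parts) :
    Nat.Partition (n - i) where
  parts := ν.parts.erase i
  parts_pos hj := ν.parts_pos (Multiset.mem_of_mem_erase hj)
  parts_sum := by
    have h1 : i + (ν.parts.erase i).sum = n := by
      rw [← Multiset.sum_cons, Multiset.cons_erase h, ν.parts_sum]
    omega

/-- Add one part equal to `i` to a partition of `n - i`. -/
def macCons {n i : ℕ} (h1 : 1 ≤ i) (h2 : i ≤ n) (μ : Nat.Partition (n - i)) :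
    Nat.Partition n where
  parts := i ::ₘ μ.parts
  parts_pos hj := by
    rcases Multiset.mem_cons.1 hj with rfl | hj
    · exact h1
    · exact μ.parts_pos hj
  parts_sum := by
    rw [Multiset.sum_cons, μ.parts_sum]
    omega

lemma mac_inner (e n i : ℕ) (hi : i ∈ Finset.Icc 1 n) :
    ∑ ν : Nat.Partition n,
        (ν.parts.count i : ℚ) * (Nat.descFactorial e (Multiset.card ν.parts - 1) : ℚ) /
          (∏ j ∈ Finset.Icc 1 n, ((ν.parts.count j).factorial : ℚ))
      = ∑ μ : Nat.Partition (n - i),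
          (Nat.descFactorial e (Multiset.card μ.parts) : ℚ) /
            (∏ j ∈ Finset.Icc 1 n, ((μ.parts.count j).factorial : ℚ)) := by
  obtain ⟨hi1, hi2⟩ := Finset.mem_Icc.1 hi
  rw [← Finset.sum_filter_of_ne (p := fun ν : Nat.Partition n => i ∈ ν.parts)
    (fun ν _ hne => by
      by_contra hmem
      exact hne (by rw [Multiset.count_eq_zero.2 hmem]; simp))]
  refine Finset.sum_bij' (fun ν hν => macErase i ν (Finset.mem_filter.1 hν).2)
    (fun μ _ => macCons hi1 hi2 μ) (fun _ _ => Finset.mem_univ _)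
    (fun μ _ => Finset.mem_filter.2 ⟨Finset.mem_univ _, Multiset.mem_cons_self _ _⟩)
    (fun ν hν => ?_) (fun μ _ => ?_) (fun ν hν => ?_)
  · have hmem := (Finset.mem_filter.1 hν).2
    apply Nat.Partition.ext
    simp [macCons, macErase, Multiset.cons_erase hmem]
  · apply Nat.Partition.ext
    simp [macCons, macErase]
  · have hmem := (Finset.mem_filter.1 hν).2
    have hcount : 1 ≤ ν.parts.count i := Multiset.one_le_count_iff_mem.2 hmem
    have hcard : Multiset.card (macErase i ν hmem).parts = Multiset.card ν.parts - 1 := by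
      simp [macErase, Multiset.card_erase_of_mem hmem]
    have hP : ∏ j ∈ Finset.Icc 1 n, ((ν.parts.count j).factorial : ℚ)
        = (ν.parts.count i : ℚ) *
          ∏ j ∈ Finset.Icc 1 n, (((macErase i ν hmem).parts.count j).factorial : ℚ) := by
      rw [← Finset.mul_prod_erase _ _ hi, ← Finset.mul_prod_erase _ (fun j =>
        (((macErase i ν hmem).parts.count j).factorial : ℚ)) hi]
      have hR : ∏ j ∈ (Finset.Icc 1 n).erase i, ((ν.parts.count j).factorial : ℚ)
          = ∏ j ∈ (Finset.Icc 1 n).erase i,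
              (((macErase i ν hmem).parts.count j).factorial : ℚ) := by
        refine Finset.prod_congr rfl fun j hj => ?_
        rw [show (macErase i ν hmem).parts = ν.parts.erase i from rfl,
          Multiset.count_erase_of_ne (Finset.ne_of_mem_erase hj)]
      rw [hR, ← mul_assoc]
      congr 1
      rw [show (macErase i ν hmem).parts = ν.parts.erase i from rfl,
        Multiset.count_erase_self]
      obtain ⟨c, hc⟩ : ∃ c, ν.parts.count i = c + 1 :=
        ⟨ν.parts.count i - 1, by omega⟩
      rw [hc]
      push_cast [Nat.factorial_succ]
      simp
    rw [hcard, hP]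
    have hne : (ν.parts.count i : ℚ) ≠ 0 := by
      exact_mod_cast (by omega : ν.parts.count i ≠ 0)
    exact mul_div_mul_left _ _ hne

lemma mac_rec (e n : ℕ) :
    macS (e + 1) n = macS e n + ∑ i ∈ Finset.Icc 1 n, macS e (n - i) := by
  unfold macS
  have key : ∀ ν : Nat.Partition n,
      ((e + 1).descFactorial (Multiset.card ν.parts) : ℚ) /
          (∏ i ∈ Finset.Icc 1 n, ((ν.parts.count i).factorial : ℚ))
        = (e.descFactorial (Multiset.card ν.parts) : ℚ) /
            (∏ i ∈ Finset.Icc 1 n, ((ν.parts.count i).factorial : ℚ))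
          + ∑ i ∈ Finset.Icc 1 n,
              (ν.parts.count i : ℚ) *
                (e.descFactorial (Multiset.card ν.parts - 1) : ℚ) /
                (∏ j ∈ Finset.Icc 1 n, ((ν.parts.count j).factorial : ℚ)) := by
    intro ν
    rw [mac_descFactorial_succ_left]
    push_cast
    rw [add_div]
    congr 1
    rw [mac_card_eq ν, Finset.sum_mul, Finset.sum_div]
  rw [Finset.sum_congr rfl fun ν _ => key ν, Finset.sum_add_distrib]
  congr 1
  rw [Finset.sum_comm]
  refine Finset.sum_congr rfl fun i hi => ?_
  rw [mac_inner e n i hi]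
  refine Finset.sum_congr rfl fun μ _ => ?_
  rw [mac_prod_ext (Nat.sub_le n i) μ]

lemma macS_choose (e n : ℕ) : macS e n = ((e + n - 1).choose n : ℚ) := by
  induction e generalizing n with
  | zero =>
    cases n with
    | zero => simp [macS]
    | succ m =>
      have hz : ∀ ν : Nat.Partition (m + 1),
          Nat.descFactorial 0 (Multiset.card ν.parts) = 0 := by
        intro ν
        rw [Nat.descFactorial_eq_zero_iff_lt]
        rw [Multiset.card_pos]
        intro h
        have := ν.parts_sum
        rw [h] at this
        simp at this
      have : (0 + (m + 1) - 1).choose (m + 1) = 0 :=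
        Nat.choose_eq_zero_of_lt (by omega)
      rw [this]
      unfold macS
      rw [Finset.sum_eq_zero fun ν _ => by rw [hz ν]; simp]
      simp
  | succ e ih =>
    rw [mac_rec, ih]
    have h2 : ∑ i ∈ Finset.Icc 1 n, macS e (n - i)
        = ∑ i ∈ Finset.Icc 1 n, ((e + (n - i) - 1).choose (n - i) : ℚ) :=
      Finset.sum_congr rfl fun i _ => ih _
    rw [h2, ← Nat.cast_sum, ← Nat.cast_add, show e + 1 + n - 1 = e + n by omega,
      Nat.cast_inj]
    have h3 : ∑ i ∈ Finset.Icc 1 n, (e + (n - i) - 1).choose (n - i)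
        = ∑ m ∈ Finset.range n, (e + m - 1).choose m := by
      rw [← Finset.Ico_add_one_right_eq_Icc, Finset.sum_Ico_eq_sum_range]
      rw [Nat.add_sub_cancel, ← Finset.sum_range_reflect]
      refine Finset.sum_congr rfl fun j hj => ?_
      have hjn := Finset.mem_range.1 hj
      congr 1 <;> omega
    rw [h3, ← mac_sum_choose e n, Finset.sum_range_succ]
    omega

lemma mac_inv_one_sub : (1 - PowerSeries.X : PowerSeries ℚ)⁻¹ = PowerSeries.mk 1 := by
  rw [PowerSeries.inv_eq_iff_mul_eq_one (by simp)]
  exact PowerSeries.mk_one_mul_one_sub_eq_one ℚ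

lemma mac_coeff (e n : ℕ) :
    PowerSeries.coeff n (((1 - PowerSeries.X : PowerSeries ℚ)⁻¹) ^ e)
      = ((e + n - 1).choose n : ℚ) := by
  cases e with
  | zero =>
    rw [pow_zero, PowerSeries.coeff_one]
    cases n with
    | zero => simp
    | succ m => simp [Nat.choose_eq_zero_of_lt (by omega : 0 + (m+1) - 1 < m + 1)]
  | succ e =>
    rw [mac_inv_one_sub, PowerSeries.mk_one_pow_eq_mk_choose_add, PowerSeries.coeff_mk]
    have h1 : e + 1 + n - 1 = e + n := by omega
    have h2 : (e + n).choose e = (e + n).choose n := by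
      have := Nat.choose_symm (Nat.le_add_left n e) (n := e + n)
      simpa using this
    rw [h1, ← h2]

/-- Macdonald's formula, combinatorial form: for natural numbers `e`, `n`,
`∑_{ν ⊢ n} e(e-1)⋯(e-(λ(ν)-1)) / (α_1(ν)! ⋯ α_n(ν)!) = C(e+n-1, n)`,
and this sum also equals the coefficient of `q^n` in `((1-q)⁻¹)^e ∈ ℚ⟦q⟧`. -/
theorem sum_partitions_descFactorial_eq_choose (e n : ℕ) :
    (∑ ν : Nat.Partition n,
        (Nat.descFactorial e (Multiset.card ν.parts) : ℚ) /
          (∏ i ∈ Finset.Icc 1 n, ((ν.parts.count i).factorial : ℚ)))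
      = ((e + n - 1).choose n : ℚ) ∧
    PowerSeries.coeff n (((1 - PowerSeries.X : PowerSeries ℚ)⁻¹) ^ e) =
      ∑ ν : Nat.Partition n,
        (Nat.descFactorial e (Multiset.card ν.parts) : ℚ) /
          (∏ i ∈ Finset.Icc 1 n, ((ν.parts.count i).factorial : ℚ)) := by
  have hS : (∑ ν : Nat.Partition n,
        (Nat.descFactorial e (Multiset.card ν.parts) : ℚ) /
          (∏ i ∈ Finset.Icc 1 n, ((ν.parts.count i).factorial : ℚ)))
      = ((e + n - 1).choose n : ℚ) := macS_choose e n
  exact ⟨hS, by rw [mac_coeff e n, hS]⟩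
end

section
/- Let X be a finite type with e elements, let n be a positive natural number, and let ν be a partition of n. Then the number of multisets m of size n over X whose multiplicity profile is ν — that is, for every i ≥ 1 the number of elements x of X occurring in m with multiplicity exactly i equals α_i(ν) — satisfies (α_1(ν)! ··· α_n(ν)!) · #{m : Sym n X | m has multiplicity profile ν} = e·(e-1)···(e-(λ(ν)-1)). (This is the finite combinatorial content of the formula e(S^n_ν X) = e(e-1)···(e-(λ(ν)-1)) / (α_1!···α_n!) for the strata of the symmetric product.) -/
/-- A multiset `m` of size `n` over `X` has multiplicity profile a partition `ν` of `n` if,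
for every `i ≥ 1`, the number of elements of `X` occurring in `m` with multiplicity exactly `i`
equals `α_i(ν)`, the number of parts of `ν` equal to `i`. -/
def HasProfile {X : Type*} [DecidableEq X] {n : ℕ} (m : Sym X n) (ν : Nat.Partition n) : Prop :=
  ∀ i : ℕ, 1 ≤ i →
    Nat.card {x : X // Multiset.count x (↑m : Multiset X) = i} = Multiset.count i ν.parts

open Finset Multiset


section Aux

lemma card_finset_sum {ι α : Type*} (s : Finset ι) (f : ι → Multiset α) :
    Multiset.card (∑ i ∈ s, f i) = ∑ i ∈ s, Multiset.card (f i) := by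
  induction s using Finset.cons_induction with
  | empty => simp
  | cons a s ha ih => simp [Finset.sum_cons, ih]

lemma sum_finset_sum {ι : Type*} (s : Finset ι) (f : ι → Multiset ℕ) :
    Multiset.sum (∑ i ∈ s, f i) = ∑ i ∈ s, Multiset.sum (f i) := by
  induction s using Finset.cons_induction with
  | empty => simp
  | cons a s ha ih => simp [Finset.sum_cons, ih]

variable {X : Type*} [Fintype X] [DecidableEq X] {n : ℕ} (ν : Nat.Partition n)

/-- Index type: for each `i ∈ [1,n]`, `α_i` indices. -/
abbrev PT (n : ℕ) (ν : Nat.Partition n) : Type :=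
  Σ i : (Finset.Icc 1 n), Fin (ν.parts.count (i : ℕ))

lemma parts_toFinset_subset : ν.parts.toFinset ⊆ Finset.Icc 1 n := by
  intro i hi
  rw [Multiset.mem_toFinset] at hi
  refine Finset.mem_Icc.mpr ⟨ν.parts_pos hi, ?_⟩
  calc i ≤ ν.parts.sum := Multiset.single_le_sum (fun x _ => Nat.zero_le x) _ hi
  _ = n := ν.parts_sum

lemma count_parts_of_not_mem_Icc {i : ℕ} (hi : i ∉ Finset.Icc 1 n) :
    ν.parts.count i = 0 := by
  rw [Multiset.count_eq_zero]
  intro h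
  exact hi (parts_toFinset_subset ν (Multiset.mem_toFinset.mpr h))

lemma card_PT : Fintype.card (PT n ν) = Multiset.card ν.parts := by
  rw [Fintype.card_sigma]
  simp only [Fintype.card_fin]
  rw [Finset.sum_coe_sort (Finset.Icc 1 n) (fun i => ν.parts.count i)]
  rw [← Multiset.toFinset_sum_count_eq ν.parts]
  refine (Finset.sum_subset (parts_toFinset_subset ν) ?_).symm
  intro i _ hi
  rw [Multiset.count_eq_zero]
  exact fun h => hi (Multiset.mem_toFinset.mpr h)

lemma sum_PT : ∑ t : PT n ν, (t.1 : ℕ) = n := by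
  have : ∑ t : PT n ν, (t.1 : ℕ)
      = ∑ i : (Finset.Icc 1 n), ν.parts.count (i : ℕ) * (i : ℕ) := by
    rw [← Finset.univ_sigma_univ, Finset.sum_sigma]
    simp [mul_comm]
  rw [this, Finset.sum_coe_sort (Finset.Icc 1 n) (fun i => ν.parts.count i * i)]
  have h1 : ∑ i ∈ Finset.Icc 1 n, ν.parts.count i * i
      = ∑ i ∈ ν.parts.toFinset, ν.parts.count i * i := by
    refine (Finset.sum_subset (parts_toFinset_subset ν) ?_).symm
    intro i _ hi
    rw [Multiset.count_eq_zero_of_notMem (fun h => hi (Multiset.mem_toFinset.mpr h))]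
    ring
  have h2 : ∑ i ∈ ν.parts.toFinset, ν.parts.count i * i = ν.parts.sum := by
    conv_rhs => rw [← Multiset.toFinset_sum_count_nsmul_eq ν.parts]
    rw [sum_finset_sum]
    refine Finset.sum_congr rfl fun i _ => ?_
    rw [Multiset.nsmul_singleton, Multiset.sum_replicate, smul_eq_mul]
  rw [h1, h2, ν.parts_sum]

/-- The multiset associated to an embedding. -/
def toMul (φ : PT n ν ↪ X) : Multiset X :=
  ∑ t : PT n ν, Multiset.replicate (t.1 : ℕ) (φ t)

omit [Fintype X] in
lemma count_toMul (φ : PT n ν ↪ X) (t : PT n ν) :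
    Multiset.count (φ t) (toMul ν φ) = (t.1 : ℕ) := by
  rw [toMul, Multiset.count_sum']
  rw [Finset.sum_eq_single t]
  · simp [Multiset.count_replicate]
  · intro t' _ ht'
    rw [Multiset.count_replicate, if_neg (fun h => ht' (φ.injective h))]
  · simp

omit [Fintype X] in
lemma count_toMul_of_not_mem (φ : PT n ν ↪ X) {x : X} (hx : ∀ t, φ t ≠ x) :
    Multiset.count x (toMul ν φ) = 0 := by
  rw [toMul, Multiset.count_sum']
  refine Finset.sum_eq_zero fun t _ => ?_
  rw [Multiset.count_replicate, if_neg (hx t)]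

omit [Fintype X] [DecidableEq X] in
lemma card_toMul (φ : PT n ν ↪ X) : Multiset.card (toMul ν φ) = n := by
  rw [toMul, card_finset_sum]
  simp only [Multiset.card_replicate]
  exact sum_PT ν

/-- fiber of the value map on `PT`. -/
def fiberEquiv {i : ℕ} (hi : i ∈ Finset.Icc 1 n) :
    {t : PT n ν // (t.1 : ℕ) = i} ≃ Fin (ν.parts.count i) where
  toFun t := Fin.cast (by rw [t.2]) t.1.2
  invFun j := ⟨⟨⟨i, hi⟩, j⟩, rfl⟩
  left_inv t := by
    obtain ⟨⟨⟨i', hi'⟩, j⟩, ht⟩ := t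
    cases ht
    rfl
  right_inv j := rfl

omit [Fintype X] in
lemma profile_toMul (φ : PT n ν ↪ X) {i : ℕ} (hi : 1 ≤ i) :
    Nat.card {x : X // Multiset.count x (toMul ν φ) = i} = ν.parts.count i := by
  have e1 : {t : PT n ν // (t.1 : ℕ) = i} ≃ {x : X // Multiset.count x (toMul ν φ) = i} := by
    refine Equiv.ofBijective (fun t => ⟨φ t.1, by rw [count_toMul, t.2]⟩) ⟨?_, ?_⟩
    · intro t t' h
      exact Subtype.ext (φ.injective (congrArg Subtype.val h))
    · rintro ⟨x, hx⟩
      by_cases h : ∃ t, φ t = x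
      · obtain ⟨t, ht⟩ := h
        refine ⟨⟨t, ?_⟩, Subtype.ext ht⟩
        rw [← hx, ← ht, count_toMul]
      · exfalso
        push_neg at h
        rw [count_toMul_of_not_mem ν φ h] at hx
        omega
  rw [← Nat.card_congr e1]
  by_cases hi' : i ∈ Finset.Icc 1 n
  · rw [Nat.card_congr (fiberEquiv ν hi')]
    simp
  · rw [count_parts_of_not_mem_Icc ν hi']
    have : IsEmpty {t : PT n ν // (t.1 : ℕ) = i} := by
      refine ⟨fun t => ?_⟩
      exact hi' (t.2 ▸ t.1.1.2)
    simp

omit [Fintype X] in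
lemma toMul_eq_of_counts (φ : PT n ν ↪ X) (m : Multiset X) (hcard : Multiset.card m = n)
    (h : ∀ t, Multiset.count (φ t) m = (t.1 : ℕ)) : toMul ν φ = m := by
  refine Multiset.eq_of_le_of_card_le ?_ (by rw [hcard, card_toMul])
  rw [Multiset.le_iff_count]
  intro x
  by_cases hx : ∃ t, φ t = x
  · obtain ⟨t, ht⟩ := hx
    rw [← ht, count_toMul, h]
  · push_neg at hx
    rw [count_toMul_of_not_mem ν φ hx]
    exact Nat.zero_le _

/-- The fiber of `toMul` over `m` is equivalent to a product of embedding types. -/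
def fiberPiEquiv (m : Sym X n) :
    {φ : PT n ν ↪ X // toMul ν φ = (↑m : Multiset X)} ≃
      ∀ i : (Finset.Icc 1 n),
        (Fin (ν.parts.count (i : ℕ)) ↪
          {x : X // Multiset.count x (↑m : Multiset X) = (i : ℕ)}) where
  toFun φ i :=
    ⟨fun j => ⟨φ.1 ⟨i, j⟩, by
        have := count_toMul ν φ.1 ⟨i, j⟩
        rwa [φ.2] at this⟩,
      fun j j' h => by
        have h2 := φ.1.injective (congrArg Subtype.val h)
        exact eq_of_heq (Sigma.mk.inj_iff.mp h2).2⟩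
  invFun F :=
    ⟨⟨fun t => (F t.1 t.2).1, by
      rintro ⟨i, j⟩ ⟨i', j'⟩ h
      have hc : (i : ℕ) = (i' : ℕ) := by
        rw [← (F i j).2, ← (F i' j').2]
        exact congrArg (fun x => Multiset.count x ((m : Multiset X))) h
      have hi : i = i' := Subtype.ext hc
      subst hi
      have : j = j' := (F i).injective (Subtype.ext h)
      rw [this]⟩, by
      refine toMul_eq_of_counts ν _ _ m.2 fun t => ?_
      exact (F t.1 t.2).2⟩
  left_inv φ := rfl
  right_inv F := by
    funext i
    refine Function.Embedding.ext fun j => Subtype.ext rfl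

lemma card_fiber (m : Sym X n) (hm : HasProfile m ν) :
    Nat.card {φ : PT n ν ↪ X // toMul ν φ = (↑m : Multiset X)} =
      ∏ i ∈ Finset.Icc 1 n, (ν.parts.count i).factorial := by
  rw [Nat.card_congr (fiberPiEquiv ν m), Nat.card_pi]
  rw [← Finset.prod_coe_sort (Finset.Icc 1 n) (fun i => (ν.parts.count i).factorial)]
  refine Finset.prod_congr rfl fun i _ => ?_
  have hcard : Fintype.card {x : X // Multiset.count x (↑m : Multiset X) = (i : ℕ)}
      = ν.parts.count (i : ℕ) := by
    rw [← Nat.card_eq_fintype_card]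
    exact hm i (Finset.mem_Icc.mp i.2).1
  rw [Nat.card_eq_fintype_card, Fintype.card_embedding_eq, hcard, Fintype.card_fin,
    Nat.descFactorial_self]

end Aux

/-- For a finite type `X` with `e` elements, `n ≥ 1` and a partition `ν` of `n`:
`(α_1(ν)! ⋯ α_n(ν)!) · #{m : Sym n X | m has profile ν}` = e(e-1)⋯(e-(λ(ν)-1))`. -/
theorem card_profile_stratum (X : Type*) [Fintype X] [DecidableEq X] (e n : ℕ)
    (he : Fintype.card X = e) (hn : 1 ≤ n) (ν : Nat.Partition n) :
    (∏ i ∈ Finset.Icc 1 n, (ν.parts.count i).factorial) *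
        Nat.card {m : Sym X n // HasProfile m ν} =
      Nat.descFactorial e (Multiset.card ν.parts) := by
  classical
  -- The map from embeddings to the stratum
  set G : (PT n ν ↪ X) → {m : Sym X n // HasProfile m ν} :=
    fun φ => ⟨⟨toMul ν φ, card_toMul ν φ⟩, fun i hi => profile_toMul ν φ hi⟩ with hG
  have key : Nat.card (PT n ν ↪ X)
      = Nat.card {m : Sym X n // HasProfile m ν}
        * ∏ i ∈ Finset.Icc 1 n, (ν.parts.count i).factorial := by
    rw [← Nat.card_congr (Equiv.sigmaFiberEquiv G)]
    have : ∀ p : {m : Sym X n // HasProfile m ν},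
        Nat.card {φ // G φ = p}
          = ∏ i ∈ Finset.Icc 1 n, (ν.parts.count i).factorial := by
      rintro ⟨m, hm⟩
      rw [← card_fiber ν m hm]
      refine Nat.card_congr (Equiv.subtypeEquivRight fun φ => ?_)
      constructor
      · intro h
        have := congrArg (fun p => ((p : {m : Sym X n // HasProfile m ν}) : Sym X n).val) h
        exact this
      · intro h
        refine Subtype.ext (Subtype.ext h)
    rw [Nat.card_eq_fintype_card, Fintype.card_sigma]
    calc ∑ p : {m : Sym X n // HasProfile m ν}, Fintype.card {φ // G φ = p}
        = ∑ p : {m : Sym X n // HasProfile m ν},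
            ∏ i ∈ Finset.Icc 1 n, (ν.parts.count i).factorial := by
          refine Finset.sum_congr rfl fun p _ => ?_
          rw [← Nat.card_eq_fintype_card]
          exact this p
      _ = _ := by
          rw [Finset.sum_const, Finset.card_univ, smul_eq_mul, Nat.card_eq_fintype_card]
  rw [mul_comm, ← key, Nat.card_eq_fintype_card, Fintype.card_embedding_eq, card_PT, he]
end

section
/- Let e and n be natural numbers with n ≥ 1. Then ∑ multinomial(e; a_0, a_1, …, a_n) · ∏_{i=1}^{n} p(i)^{a_i}, where the sum ranges over all tuples (a_0, a_1, …, a_n) of natural numbers with a_0 + a_1 + ⋯ + a_n = e and ∑_{i=1}^{n} i·a_i = n, equals ∑_{ν ⊢ n} (∏_{i=1}^{n} p(i)^{α_i(ν)}) · e·(e-1)···(e-(λ(ν)-1)) / (α_1(ν)! ··· α_n(ν)!), the sum over all partitions ν of n, computed in ℚ. (This is the key multinomial-to-partition reindexing identity in the proof of the main theorem; when λ(ν) > e the corresponding descending factorial vanishes.) -/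
section Aux

open Finset

lemma fin_filter_image (n : ℕ) :
    (Finset.univ.filter (fun i : Fin (n+1) => 1 ≤ (i : ℕ))).image (fun i : Fin (n+1) => (i : ℕ))
      = Finset.Icc 1 n := by
  ext j
  simp only [mem_image, mem_filter, mem_univ, true_and, mem_Icc]
  constructor
  · rintro ⟨i, hi, rfl⟩; exact ⟨hi, Nat.lt_succ_iff.mp i.isLt⟩
  · rintro ⟨h1, h2⟩; exact ⟨⟨j, Nat.lt_succ_of_le h2⟩, h1, rfl⟩

lemma prod_fin_eq_Icc {M : Type*} [CommMonoid M] (n : ℕ) (g : ℕ → M) :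
    ∏ i ∈ Finset.univ.filter (fun i : Fin (n+1) => 1 ≤ (i : ℕ)), g (i : ℕ)
      = ∏ j ∈ Finset.Icc 1 n, g j := by
  rw [← fin_filter_image n, Finset.prod_image]
  intro x _ y _ h; exact Fin.val_injective h

lemma sum_fin_eq_Icc {M : Type*} [AddCommMonoid M] (n : ℕ) (g : ℕ → M) :
    ∑ i ∈ Finset.univ.filter (fun i : Fin (n+1) => 1 ≤ (i : ℕ)), g (i : ℕ)
      = ∑ j ∈ Finset.Icc 1 n, g j := by
  rw [← fin_filter_image n, Finset.sum_image]
  intro x _ y _ h; exact Fin.val_injective h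

lemma filter_zero_eq (n : ℕ) :
    Finset.univ.filter (fun i : Fin (n+1) => (i : ℕ) = 0) = {0} := by
  ext i
  simp only [Finset.mem_filter, Finset.mem_univ, true_and, Finset.mem_singleton]
  constructor
  · intro h; exact Fin.ext (by simpa using h)
  · rintro rfl; simp

lemma filter_not_zero_eq (n : ℕ) :
    Finset.univ.filter (fun i : Fin (n+1) => ¬ (i : ℕ) = 0)
      = Finset.univ.filter (fun i : Fin (n+1) => 1 ≤ (i : ℕ)) := by
  ext i
  simp [Nat.one_le_iff_ne_zero]

lemma prod_univ_fin_split {M : Type*} [CommMonoid M] (n : ℕ) (g : Fin (n+1) → M) :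
    ∏ i, g i = g 0 * ∏ i ∈ Finset.univ.filter (fun i : Fin (n+1) => 1 ≤ (i : ℕ)), g i := by
  rw [← Finset.prod_filter_mul_prod_filter_not Finset.univ (fun i : Fin (n+1) => (i : ℕ) = 0),
    filter_zero_eq, filter_not_zero_eq, Finset.prod_singleton]

lemma sum_univ_fin_split {M : Type*} [AddCommMonoid M] (n : ℕ) (g : Fin (n+1) → M) :
    ∑ i, g i = g 0 + ∑ i ∈ Finset.univ.filter (fun i : Fin (n+1) => 1 ≤ (i : ℕ)), g i := by
  rw [← Finset.sum_filter_add_sum_filter_not Finset.univ (fun i : Fin (n+1) => (i : ℕ) = 0),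
    filter_zero_eq, filter_not_zero_eq, Finset.sum_singleton]

lemma parts_mem_Icc {n : ℕ} (ν : Nat.Partition n) {j : ℕ} (hj : j ∈ ν.parts) :
    j ∈ Finset.Icc 1 n :=
  Finset.mem_Icc.2 ⟨ν.parts_pos hj, (Multiset.le_sum_of_mem hj).trans_eq ν.parts_sum⟩

lemma count_parts_eq_zero {n : ℕ} (ν : Nat.Partition n) {j : ℕ} (hj : j ∉ Finset.Icc 1 n) :
    ν.parts.count j = 0 :=
  Multiset.count_eq_zero.2 fun h => hj (parts_mem_Icc ν h)

lemma card_parts_eq {n : ℕ} (ν : Nat.Partition n) :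
    Multiset.card ν.parts = ∑ j ∈ Finset.Icc 1 n, ν.parts.count j :=
  (Multiset.sum_count_eq_card fun _ h => parts_mem_Icc ν h).symm

lemma sum_parts_eq {n : ℕ} (ν : Nat.Partition n) :
    ∑ j ∈ Finset.Icc 1 n, j * ν.parts.count j = n := by
  classical
  have h : ν.parts.sum = ∑ m ∈ ν.parts.toFinset, ν.parts.count m • m := by
    simpa using Finset.sum_multiset_map_count ν.parts id
  have h2 : ∑ m ∈ ν.parts.toFinset, ν.parts.count m • m
      = ∑ j ∈ Finset.Icc 1 n, ν.parts.count j • j := by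
    apply Finset.sum_subset
    · intro x hx; exact parts_mem_Icc ν (Multiset.mem_toFinset.1 hx)
    · intro x _ hx
      rw [Multiset.count_eq_zero.2 (fun hc => hx (Multiset.mem_toFinset.2 hc))]
      simp
  calc ∑ j ∈ Finset.Icc 1 n, j * ν.parts.count j
      = ∑ j ∈ Finset.Icc 1 n, ν.parts.count j • j :=
        Finset.sum_congr rfl fun x _ => by rw [smul_eq_mul, mul_comm]
    _ = ∑ m ∈ ν.parts.toFinset, ν.parts.count m • m := h2.symm
    _ = ν.parts.sum := h.symm
    _ = n := ν.parts_sum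

/-- The tuple of part-multiplicities of a partition, with `a 0 = e - length`. -/
def aOf (e n : ℕ) (ν : Nat.Partition n) : Fin (n+1) → ℕ :=
  fun i => if (i : ℕ) = 0 then e - Multiset.card ν.parts else ν.parts.count (i : ℕ)

/-- The partition built from a multiplicity tuple. -/
def partOf (n : ℕ) (a : Fin (n+1) → ℕ)
    (ha : ∑ i : Fin (n+1), (i : ℕ) * a i = n) : Nat.Partition n where
  parts := ∑ i ∈ Finset.univ.filter (fun i : Fin (n+1) => 1 ≤ (i : ℕ)),
    Multiset.replicate (a i) (i : ℕ)
  parts_pos := by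
    intro j hj
    rw [Multiset.mem_sum] at hj
    obtain ⟨i, hi, hji⟩ := hj
    rw [Multiset.eq_of_mem_replicate hji]
    exact (Finset.mem_filter.1 hi).2
  parts_sum := by
    have hmap := map_sum Multiset.sumAddMonoidHom
      (fun i : Fin (n+1) => Multiset.replicate (a i) (i : ℕ))
      (Finset.univ.filter (fun i : Fin (n+1) => 1 ≤ (i : ℕ)))
    simp only [Multiset.coe_sumAddMonoidHom] at hmap
    have hterm : ∑ x ∈ Finset.univ.filter (fun i : Fin (n+1) => 1 ≤ (i : ℕ)),
        (Multiset.replicate (a x) (x : ℕ)).sum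
        = ∑ x ∈ Finset.univ.filter (fun i : Fin (n+1) => 1 ≤ (i : ℕ)), (x : ℕ) * a x :=
      Finset.sum_congr rfl fun i _ => by
        rw [Multiset.sum_replicate, smul_eq_mul, mul_comm]
    have hs := sum_univ_fin_split n (fun i : Fin (n+1) => (i : ℕ) * a i)
    rw [Fin.val_zero, zero_mul, zero_add] at hs
    rw [hmap, hterm, ← hs]
    exact ha

lemma count_partOf {n : ℕ} (a : Fin (n+1) → ℕ)
    (ha : ∑ i : Fin (n+1), (i : ℕ) * a i = n) (j : Fin (n+1)) (hj : 1 ≤ (j : ℕ)) :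
    (partOf n a ha).parts.count (j : ℕ) = a j := by
  classical
  show Multiset.count (j : ℕ)
    (∑ i ∈ Finset.univ.filter (fun i : Fin (n+1) => 1 ≤ (i : ℕ)),
      Multiset.replicate (a i) (i : ℕ)) = a j
  rw [Multiset.count_sum']
  rw [Finset.sum_eq_single j]
  · simp [Multiset.count_replicate]
  · intro i _ hne
    rw [Multiset.count_replicate, if_neg (fun h => hne (Fin.val_injective h))]
  · intro h
    exact absurd (Finset.mem_filter.2 ⟨Finset.mem_univ (j : Fin (n+1)), hj⟩) h

lemma card_partOf {n : ℕ} (a : Fin (n+1) → ℕ)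
    (ha : ∑ i : Fin (n+1), (i : ℕ) * a i = n) :
    Multiset.card (partOf n a ha).parts
      = ∑ i ∈ Finset.univ.filter (fun i : Fin (n+1) => 1 ≤ (i : ℕ)), a i := by
  classical
  show Multiset.card
    (∑ i ∈ Finset.univ.filter (fun i : Fin (n+1) => 1 ≤ (i : ℕ)),
      Multiset.replicate (a i) (i : ℕ)) = _
  have hmap := map_sum
    (⟨⟨fun m : Multiset ℕ => Multiset.card m, Multiset.card_zero⟩, Multiset.card_add⟩ :
      Multiset ℕ →+ ℕ)
    (fun i : Fin (n+1) => Multiset.replicate (a i) (i : ℕ))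
    (Finset.univ.filter (fun i : Fin (n+1) => 1 ≤ (i : ℕ)))
  simp only [AddMonoidHom.coe_mk, ZeroHom.coe_mk] at hmap
  rw [hmap]
  simp [Multiset.card_replicate]

lemma aOf_eq_count {e n : ℕ} (ν : Nat.Partition n) {i : Fin (n+1)} (hi : 1 ≤ (i : ℕ)) :
    aOf e n ν i = ν.parts.count (i : ℕ) := by
  simp [aOf, Nat.one_le_iff_ne_zero.1 hi]

lemma aOf_mul_sum (e n : ℕ) (ν : Nat.Partition n) :
    ∑ i : Fin (n+1), (i : ℕ) * aOf e n ν i = n := by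
  rw [sum_univ_fin_split n (fun i : Fin (n+1) => (i : ℕ) * aOf e n ν i)]
  rw [Fin.val_zero, zero_mul, zero_add]
  have hc : ∀ i ∈ Finset.univ.filter (fun i : Fin (n+1) => 1 ≤ (i : ℕ)),
      (i : ℕ) * aOf e n ν i = (i : ℕ) * ν.parts.count (i : ℕ) := fun i hi => by
    rw [aOf_eq_count ν (Finset.mem_filter.1 hi).2]
  rw [Finset.sum_congr rfl hc, sum_fin_eq_Icc n (fun j => j * ν.parts.count j), sum_parts_eq]

lemma aOf_rest_sum (e n : ℕ) (ν : Nat.Partition n) :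
    ∑ i ∈ Finset.univ.filter (fun i : Fin (n+1) => 1 ≤ (i : ℕ)), aOf e n ν i
      = Multiset.card ν.parts := by
  have hc : ∀ i ∈ Finset.univ.filter (fun i : Fin (n+1) => 1 ≤ (i : ℕ)),
      aOf e n ν i = ν.parts.count (i : ℕ) := fun i hi => by
    rw [aOf_eq_count ν (Finset.mem_filter.1 hi).2]
  rw [Finset.sum_congr rfl hc, sum_fin_eq_Icc n (fun j => ν.parts.count j), ← card_parts_eq]

lemma aOf_sum (e n : ℕ) (ν : Nat.Partition n) (h : Multiset.card ν.parts ≤ e) :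
    ∑ i, aOf e n ν i = e := by
  rw [sum_univ_fin_split n (aOf e n ν)]
  have h0 : aOf e n ν 0 = e - Multiset.card ν.parts := by simp [aOf]
  rw [h0, aOf_rest_sum]
  omega

end Aux

open Finset in
/-- Multinomial-to-partition reindexing: for `e, n ∈ ℕ` with `n ≥ 1`,
`∑ multinomial(e; a_0,…,a_n) ∏_{i=1}^n p(i)^{a_i}`, summed over tuples `(a_0,…,a_n)` with
`∑ a_i = e` and `∑ i·a_i = n`, equals
`∑_{ν ⊢ n} (∏_i p(i)^{α_i(ν)}) · e(e-1)⋯(e-(λ(ν)-1)) / (α_1(ν)! ⋯ α_n(ν)!)`. -/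
theorem multinomial_sum_eq_partition_sum (e n : ℕ) (hn : 1 ≤ n) :
    (∑ a ∈ (Fintype.piFinset fun _ : Fin (n + 1) => Finset.range (e + 1)).filter
        (fun a : Fin (n + 1) → ℕ =>
          (∑ i, a i) = e ∧ (∑ i : Fin (n + 1), (i : ℕ) * a i) = n),
      (Nat.multinomial Finset.univ a : ℚ) *
        ∏ i ∈ Finset.univ.filter (fun i : Fin (n + 1) => 1 ≤ (i : ℕ)),
          (partitionFunction (i : ℕ) : ℚ) ^ a i) =
      ∑ ν : Nat.Partition n,
        (∏ i ∈ Finset.Icc 1 n, (partitionFunction i : ℚ) ^ (ν.parts.count i)) *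
          (Nat.descFactorial e (Multiset.card ν.parts) : ℚ) /
          (∏ i ∈ Finset.Icc 1 n, ((ν.parts.count i).factorial : ℚ)) := by
  classical
  have hzero : ∀ ν : Nat.Partition n, ν ∈ (Finset.univ : Finset (Nat.Partition n)) →
      ((∏ i ∈ Finset.Icc 1 n, (partitionFunction i : ℚ) ^ (ν.parts.count i)) *
          (Nat.descFactorial e (Multiset.card ν.parts) : ℚ) /
          (∏ i ∈ Finset.Icc 1 n, ((ν.parts.count i).factorial : ℚ)) ≠ 0) →
      Multiset.card ν.parts ≤ e := by
    intro ν _ h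
    by_contra hc
    push_neg at hc
    rw [Nat.descFactorial_of_lt hc] at h
    simp at h
  rw [← Finset.sum_filter_of_ne hzero]
  refine Finset.sum_bij'
    (i := fun a ha => partOf n a (Finset.mem_filter.1 ha).2.2)
    (j := fun ν _ => aOf e n ν)
    ?_ ?_ ?_ ?_ ?_
  · -- maps into partition filter
    intro a ha
    obtain ⟨hmem, h1, h2⟩ := Finset.mem_filter.1 ha
    rw [Finset.mem_filter]
    refine ⟨Finset.mem_univ _, ?_⟩
    rw [card_partOf]
    calc ∑ i ∈ Finset.univ.filter (fun i : Fin (n+1) => 1 ≤ (i : ℕ)), a i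
        ≤ ∑ i, a i := Finset.sum_le_sum_of_subset (Finset.filter_subset _ _)
      _ = e := h1
  · -- maps into a-filter
    intro ν hν
    have hcard : Multiset.card ν.parts ≤ e := (Finset.mem_filter.1 hν).2
    rw [Finset.mem_filter]
    refine ⟨?_, aOf_sum e n ν hcard, aOf_mul_sum e n ν⟩
    rw [Fintype.mem_piFinset]
    intro i
    rw [Finset.mem_range, Nat.lt_succ_iff]
    by_cases h : (i : ℕ) = 0
    · simp only [aOf, h, if_pos]; omega
    · rw [aOf_eq_count ν (Nat.one_le_iff_ne_zero.2 h)]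
      exact le_trans (Multiset.count_le_card _ _) hcard
  · -- left inverse : aOf (partOf a) = a
    intro a ha
    obtain ⟨hmem, h1, h2⟩ := Finset.mem_filter.1 ha
    funext i
    by_cases h : (i : ℕ) = 0
    · have hi0 : i = 0 := by
        have : (i : ℕ) = ((0 : Fin (n+1)) : ℕ) := by simpa using h
        exact Fin.val_injective this
      subst hi0
      have hgoal : aOf e n (partOf n a h2) 0 = e - Multiset.card (partOf n a h2).parts := by
        simp [aOf]
      simp only [hgoal, card_partOf]
      have hs := sum_univ_fin_split n a
      rw [h1] at hs
      omega
    · have h1i : 1 ≤ (i : ℕ) := Nat.one_le_iff_ne_zero.2 h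
      rw [aOf_eq_count _ h1i]
      exact count_partOf a h2 i h1i
  · -- right inverse : partOf (aOf ν) = ν
    intro ν hν
    apply Nat.Partition.ext
    ext j
    by_cases hj : j ∈ Finset.Icc 1 n
    · have hj1 : 1 ≤ j := (Finset.mem_Icc.1 hj).1
      have hjlt : j < n + 1 := by
        have := (Finset.mem_Icc.1 hj).2; omega
      have hcv := count_partOf (aOf e n ν) (aOf_mul_sum e n ν)
        (⟨j, hjlt⟩ : Fin (n+1)) (by simpa using hj1)
      refine Eq.trans ?_ ((hcv.trans (aOf_eq_count ν (by simpa using hj1))))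
      rfl
    · rw [count_parts_eq_zero _ hj, count_parts_eq_zero _ hj]
  · -- term equality
    intro a ha
    obtain ⟨hmem, h1, h2⟩ := Finset.mem_filter.1 ha
    set ν : Nat.Partition n := partOf n a (Finset.mem_filter.1 ha).2.2 with hνdef
    have hcount : ∀ j : Fin (n+1), 1 ≤ (j : ℕ) → ν.parts.count (j : ℕ) = a j :=
      fun j hj => count_partOf a _ j hj
    have hcard : Multiset.card ν.parts
        = ∑ i ∈ Finset.univ.filter (fun i : Fin (n+1) => 1 ≤ (i : ℕ)), a i :=
      card_partOf a _
    have hcard_le : Multiset.card ν.parts ≤ e := by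
      rw [hcard, ← h1]
      exact Finset.sum_le_sum_of_subset (Finset.filter_subset _ _)
    have ha0 : a 0 = e - Multiset.card ν.parts := by
      have hs := sum_univ_fin_split n a
      rw [h1] at hs
      rw [hcard]
      omega
    have hprodp : ∏ i ∈ Finset.univ.filter (fun i : Fin (n+1) => 1 ≤ (i : ℕ)),
        (partitionFunction (i : ℕ) : ℚ) ^ a i
        = ∏ j ∈ Finset.Icc 1 n, (partitionFunction j : ℚ) ^ (ν.parts.count j) := by
      rw [← prod_fin_eq_Icc n (fun j => (partitionFunction j : ℚ) ^ (ν.parts.count j))]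
      exact Finset.prod_congr rfl fun i hi => by
        rw [hcount i (Finset.mem_filter.1 hi).2]
    have hprodfac : ∏ i ∈ Finset.univ.filter (fun i : Fin (n+1) => 1 ≤ (i : ℕ)),
        (a i).factorial = ∏ j ∈ Finset.Icc 1 n, (ν.parts.count j).factorial := by
      rw [← prod_fin_eq_Icc n (fun j => (ν.parts.count j).factorial)]
      exact Finset.prod_congr rfl fun i hi => by
        rw [hcount i (Finset.mem_filter.1 hi).2]
    have hspec := Nat.multinomial_spec (Finset.univ : Finset (Fin (n+1))) a
    rw [h1] at hspec
    have hprod_split : ∏ i, (a i).factorial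
        = (e - Multiset.card ν.parts).factorial *
          ∏ j ∈ Finset.Icc 1 n, (ν.parts.count j).factorial := by
      rw [prod_univ_fin_split n (fun i => (a i).factorial), ha0, hprodfac]
    have hdesc := Nat.factorial_mul_descFactorial hcard_le (n := e)
    have hkey : (∏ j ∈ Finset.Icc 1 n, (ν.parts.count j).factorial) *
        Nat.multinomial Finset.univ a = Nat.descFactorial e (Multiset.card ν.parts) := by
      have hpos : 0 < (e - Multiset.card ν.parts).factorial := Nat.factorial_pos _
      apply Nat.eq_of_mul_eq_mul_left hpos
      rw [← mul_assoc, ← hprod_split, hspec, ← hdesc]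
    have hC : (∏ j ∈ Finset.Icc 1 n, ((ν.parts.count j).factorial : ℚ)) ≠ 0 := by
      apply Finset.prod_ne_zero_iff.2
      intro j _
      exact_mod_cast (Nat.factorial_pos _).ne'
    have hkeyQ : (∏ j ∈ Finset.Icc 1 n, ((ν.parts.count j).factorial : ℚ)) *
        (Nat.multinomial Finset.univ a : ℚ)
        = (Nat.descFactorial e (Multiset.card ν.parts) : ℚ) := by
      exact_mod_cast congrArg (Nat.cast : ℕ → ℚ) hkey
    rw [hprodp]
    rw [eq_div_iff hC]
    linear_combination (∏ j ∈ Finset.Icc 1 n, (partitionFunction j : ℚ) ^ ν.parts.count j) * hkeyQ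
end
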